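/- arXiv:2302.08440 — 10 statements merged into one kernel-verified Lean document; each statement's English description precedes it below -/
import Mathlib

section
/- Let (Ω, d₁) and (Ω, d₂) be two metrics on a set Ω making it a compact metric space, inducing the same topology. If a sequence {ωₙ}ₙ≥0 ⊆ Ω satisfies the repetition property with respect to d₁, then it satisfies the repetition property with respect to d₂. -/
/-- A sequence `w` in `Ω` satisfies the repetition property with respect to a
distance function `d` if for all `ε > 0` and all `r ∈ ℤ₊` there exists `q ∈ ℤ₊`
such that `d (w n) (w (n+q)) < ε` for all `n ∈ {0, 1, …, r*q}`. -/
def SatisfiesRP {Ω : Type*} (d : Ω → Ω → ℝ) (w : ℕ → Ω) : Prop :=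
  ∀ ε > (0 : ℝ), ∀ r : ℕ, 0 < r → ∃ q : ℕ, 0 < q ∧ ∀ n ≤ r * q, d (w n) (w (n + q)) < ε

/-! On a compact space the identity is uniformly continuous between any two metrics inducing the
topology, and the repetition property is preserved by uniformly continuous maps: the period `q`
that works for the `δ` of uniform continuity works for `ε`. -/

theorem SatisfiesRP.comp_uniformContinuous {α β : Type*} [PseudoMetricSpace α]
    [PseudoMetricSpace β] {f : α → β} (hf : UniformContinuous f) {w : ℕ → α}
    (h : SatisfiesRP dist w) : SatisfiesRP dist (f ∘ w) := by
  intro ε hε r hr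
  obtain ⟨δ, hδ, hfδ⟩ := Metric.uniformContinuous_iff.mp hf ε hε
  obtain ⟨q, hq, hwq⟩ := h δ hδ r hr
  exact ⟨q, hq, fun n hn => hfδ (hwq n hn)⟩

theorem rp_indep_of_metric {Ω : Type*} (m₁ m₂ : MetricSpace Ω)
    (htop : m₁.toUniformSpace.toTopologicalSpace = m₂.toUniformSpace.toTopologicalSpace)
    (hcompact : @CompactSpace Ω m₁.toUniformSpace.toTopologicalSpace)
    (w : ℕ → Ω)
    (h : SatisfiesRP (@dist Ω m₁.toDist) w) :
    SatisfiesRP (@dist Ω m₂.toDist) w := by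
  have hcont : @Continuous Ω Ω m₁.toUniformSpace.toTopologicalSpace
      m₂.toUniformSpace.toTopologicalSpace id := by
    rw [htop]
    exact continuous_id
  have huc : @UniformContinuous Ω Ω m₁.toUniformSpace m₂.toUniformSpace id :=
    @CompactSpace.uniformContinuous_of_continuous Ω Ω m₁.toUniformSpace m₂.toUniformSpace
      hcompact id hcont
  exact @SatisfiesRP.comp_uniformContinuous Ω Ω m₁.toPseudoMetricSpace m₂.toPseudoMetricSpace
    id huc w h
end

section
/- If the dynamical system (Ω, T) satisfies the topological repetition property (TRP), i.e. PRP(T) is dense in Ω, then PRP(T) is a residual (comeager) subset of Ω. -/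
/-!
`PRPset T` is the countable intersection, over `ε = 1/(k+1)` and `r ≥ 1`, of the sets of points
admitting some return time `q` that is `ε`-good along the orbit segment of length `r * q`. Each of
these is a union over `q` of finitely many conditions `dist (T^[n] ω) (T^[n + q] ω) < ε`, hence
open by continuity of `T`. So `PRPset T` is a Gδ set, and a dense Gδ set is residual.
-/

def PRPset {Ω : Type*} [PseudoMetricSpace Ω] (T : Ω → Ω) : Set Ω :=
  {ω | ∀ ε > (0 : ℝ), ∀ r : ℕ, 0 < r → ∃ q : ℕ, 0 < q ∧
    ∀ n ≤ r * q, dist (T^[n] ω) (T^[n + q] ω) < ε}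

section UniformReturn

variable {Ω : Type*} [PseudoMetricSpace Ω]

def uniformReturnSet (f : Ω → Ω) (ε : ℝ) (r : ℕ) : Set Ω :=
  {ω | ∃ q : ℕ, 0 < q ∧ ∀ n ≤ r * q, dist (f^[n] ω) (f^[n + q] ω) < ε}

theorem uniformReturnSet_eq_iUnion (f : Ω → Ω) (ε : ℝ) (r : ℕ) :
    uniformReturnSet f ε r = ⋃ q ∈ {q : ℕ | 0 < q}, ⋂ n ∈ Finset.range (r * q + 1),
      {ω | dist (f^[n] ω) (f^[n + q] ω) < ε} := by
  ext ω
  simp [uniformReturnSet]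

theorem isOpen_uniformReturnSet {f : Ω → Ω} (hf : Continuous f) (ε : ℝ) (r : ℕ) :
    IsOpen (uniformReturnSet f ε r) := by
  rw [uniformReturnSet_eq_iUnion]
  refine isOpen_biUnion fun q _ => isOpen_biInter_finset fun n _ => ?_
  exact isOpen_lt ((hf.iterate n).dist (hf.iterate (n + q))) continuous_const

theorem PRPset_subset_uniformReturnSet (f : Ω → Ω) {ε : ℝ} (hε : 0 < ε) {r : ℕ} (hr : 0 < r) :
    PRPset f ⊆ uniformReturnSet f ε r :=
  fun _ hω => hω ε hε r hr

theorem PRPset_eq_iInter_uniformReturnSet (f : Ω → Ω) :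
    PRPset f = ⋂ (k : ℕ) (r : ℕ), uniformReturnSet f (1 / (k + 1)) (r + 1) := by
  refine Set.Subset.antisymm (Set.subset_iInter₂ fun k r =>
    PRPset_subset_uniformReturnSet f Nat.one_div_pos_of_nat r.succ_pos) ?_
  intro ω hω ε hε r hr
  obtain ⟨k, hk⟩ := exists_nat_one_div_lt hε
  obtain ⟨q, hq, hreturn⟩ := Set.mem_iInter₂.1 hω k (r - 1)
  refine ⟨q, hq, fun n hn => (hreturn n ?_).trans hk⟩
  rwa [Nat.sub_add_cancel hr]

theorem isGδ_PRPset {f : Ω → Ω} (hf : Continuous f) : IsGδ (PRPset f) := by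
  rw [PRPset_eq_iInter_uniformReturnSet]
  exact IsGδ.iInter fun k => IsGδ.iInter_of_isOpen fun r => isOpen_uniformReturnSet hf _ _

end UniformReturn

theorem trp_implies_residual_general {Ω : Type*} [MetricSpace Ω] (T : Ω ≃ₜ Ω)
    (htrp : Dense (PRPset ⇑T)) :
    PRPset ⇑T ∈ residual Ω :=
  residual_of_dense_Gδ (isGδ_PRPset T.continuous) htrp

theorem trp_implies_residual {Ω : Type*} [MetricSpace Ω] [CompactSpace Ω] (T : Ω ≃ₜ Ω)
    (htrp : Dense (PRPset ⇑T)) :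
    PRPset ⇑T ∈ residual Ω :=
  trp_implies_residual_general T htrp
end

section
/- Suppose α ∈ PRP(T) and the forward orbit {Tⁿα}ₙ≥0 is dense in Ω. Then: (i) the system (Ω, T) satisfies TRP, i.e., PRP(T) is dense in Ω; (ii) for every q ∈ ℤ₊, the shifted orbit {T^{q+j}α}_{j≥0} is also dense in Ω. -/
lemma orbit_mem_PRPset {Ω : Type*} [PseudoMetricSpace Ω] (T : Ω → Ω) (α : Ω)
    (hα : α ∈ PRPset T) (m : ℕ) : T^[m] α ∈ PRPset T := by
  intro ε hε r hr
  obtain ⟨q, hq, hd⟩ := hα ε hε (r + m) (by omega)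
  refine ⟨q, hq, fun n hn => ?_⟩
  have h1 : T^[n] (T^[m] α) = T^[m + n] α := by
    rw [← Function.iterate_add_apply]; ring_nf
  have h2 : T^[n + q] (T^[m] α) = T^[m + n + q] α := by
    rw [← Function.iterate_add_apply]; ring_nf
  rw [h1, h2]
  apply hd
  have : m ≤ m * q := Nat.le_mul_of_pos_right m hq
  calc m + n ≤ m * q + r * q := by omega
    _ = (r + m) * q := by ring

lemma telescope {Ω : Type*} [PseudoMetricSpace Ω] (T : Ω → Ω) (α : Ω)
    (ε' : ℝ) (p R : ℕ)
    (h : ∀ m ≤ R, dist (T^[m] α) (T^[m + p] α) < ε') :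
    ∀ k n : ℕ, n + k * p ≤ R + p → dist (T^[n] α) (T^[n + k * p] α) ≤ k * ε' := by
  intro k
  induction k with
  | zero => intro n _; simp
  | succ k ih =>
    intro n hn
    have hstep : dist (T^[n + k * p] α) (T^[n + (k + 1) * p] α) < ε' := by
      have : n + (k + 1) * p = (n + k * p) + p := by ring
      rw [this]
      exact h _ (by nlinarith)
    have hih := ih n (by nlinarith)
    calc dist (T^[n] α) (T^[n + (k + 1) * p] α)
        ≤ dist (T^[n] α) (T^[n + k * p] α)
          + dist (T^[n + k * p] α) (T^[n + (k + 1) * p] α) := dist_triangle _ _ _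
      _ ≤ k * ε' + ε' := by linarith
      _ = (k + 1 : ℕ) * ε' := by push_cast; ring
  
theorem dense_orbit_of_prp_point {Ω : Type*} [MetricSpace Ω] [CompactSpace Ω] [Infinite Ω]
    (T : Ω ≃ₜ Ω) (α : Ω) (hα : α ∈ PRPset ⇑T)
    (hdense : Dense (Set.range fun n : ℕ => (⇑T)^[n] α)) :
    Dense (PRPset ⇑T) ∧
    ∀ q : ℕ, 0 < q → Dense (Set.range fun j : ℕ => (⇑T)^[q + j] α) := by
  constructor
  · apply hdense.mono
    rintro _ ⟨n, rfl⟩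
    exact orbit_mem_PRPset _ α hα n
  · intro q hq
    rw [Metric.dense_iff]
    intro ω ε hε
    -- find an orbit point close to ω
    obtain ⟨_, hb, n, rfl⟩ := Metric.dense_iff.mp hdense ω (ε / 2) (by linarith)
    simp only [Metric.mem_ball] at hb
    -- PRP with precision ε/(2q)
    have hq' : (0 : ℝ) < ε / (2 * q) := by positivity
    obtain ⟨p, hp, hd⟩ := hα (ε / (2 * q)) hq' (n + q) (by omega)
    have htel : dist (T^[n] α) (T^[n + q * p] α) ≤ q * (ε / (2 * q)) := by
      apply telescope (⇑T) α _ p ((n + q) * p) _ q n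
      · nlinarith
      · intro m hm; exact hd m hm
    have hqε : (q : ℝ) * (ε / (2 * q)) = ε / 2 := by
      field_simp
    refine ⟨T^[q + (n + q * p - q)] α, ?_, ⟨n + q * p - q, rfl⟩⟩
    have hge : q ≤ n + q * p := by nlinarith
    have : q + (n + q * p - q) = n + q * p := by omega
    rw [Metric.mem_ball, this]
    calc dist (T^[n + q * p] α) ω
        ≤ dist (T^[n + q * p] α) (T^[n] α) + dist (T^[n] α) ω := dist_triangle _ _ _
      _ < ε / 2 + ε / 2 := by rw [dist_comm (T^[n + q * p] α)]; linarith [hqε ▸ htel]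
      _ = ε := by ring
end

section
/- Let B be an invertible 2×2 real (or complex) matrix and x a vector with ‖x‖ = 1. Then max{‖B²x‖, ‖Bx‖, ‖B⁻¹x‖, ‖B⁻²x‖} ≥ 1/2. -/
/-!
In dimension two, `x`, `B x`, `B² x` satisfy a nontrivial relation `a x + b B x + c B² x = 0`;
applying `B⁻¹` once or twice turns it into relations whose coefficient of `x` is `b`, resp. `c`.
Dividing the relation in which `x` carries the coefficient of largest norm by that coefficient
writes `x` as a combination, with coefficients of norm at most one, of two of
`B² x, B x, B⁻¹ x, B⁻² x`, so one of those has norm at least `‖x‖ / 2`.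
-/

theorem exists_smul_add_smul_add_smul_eq_zero {K V : Type*} [DivisionRing K] [AddCommGroup V]
    [Module K V] [Module.Finite K V] (hV : Module.finrank K V ≤ 2) (x y z : V) :
    ∃ a b c : K, (a ≠ 0 ∨ b ≠ 0 ∨ c ≠ 0) ∧ a • x + b • y + c • z = 0 := by
  have hdep : ¬ LinearIndependent K ![x, y, z] := fun h => by
    have := h.fintype_card_le_finrank
    simp only [Fintype.card_fin] at this
    omega
  obtain ⟨g, hsum, i, hi⟩ := Fintype.not_linearIndependent_iff.mp hdep
  refine ⟨g 0, g 1, g 2, ?_, by simpa [Fin.sum_univ_three] using hsum⟩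
  fin_cases i <;> simp_all

theorem norm_le_norm_add_norm_of_smul_add_smul_add_smul_eq_zero {𝕜 E : Type*} [NormedField 𝕜]
    [SeminormedAddCommGroup E] [NormedSpace 𝕜 E] {a b c : 𝕜} {x u w : E}
    (hb : ‖b‖ ≤ ‖a‖) (hc : ‖c‖ ≤ ‖a‖) (hne : a ≠ 0 ∨ b ≠ 0 ∨ c ≠ 0)
    (h : a • x + b • u + c • w = 0) : ‖x‖ ≤ ‖u‖ + ‖w‖ := by
  have ha : a ≠ 0 := by
    rintro rfl
    simp only [norm_zero, norm_le_zero_iff] at hb hc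
    tauto
  have hax : a • x = -(b • u + c • w) := by
    rw [eq_neg_iff_add_eq_zero, ← add_assoc, h]
  have : ‖a‖ * ‖x‖ ≤ ‖a‖ * (‖u‖ + ‖w‖) :=
    calc ‖a‖ * ‖x‖ = ‖b • u + c • w‖ := by rw [← norm_smul, hax, norm_neg]
      _ ≤ ‖b‖ * ‖u‖ + ‖c‖ * ‖w‖ := (norm_add_le _ _).trans_eq (by rw [norm_smul, norm_smul])
      _ ≤ ‖a‖ * (‖u‖ + ‖w‖) := by
        rw [mul_add]
        gcongr
  exact le_of_mul_le_mul_left this (norm_pos_iff.mpr ha)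

theorem norm_le_two_mul_max_norm_pow_apply {𝕜 E : Type*} [NormedField 𝕜] [NormedAddCommGroup E]
    [NormedSpace 𝕜 E] [FiniteDimensional 𝕜 E] (hE : Module.finrank 𝕜 E ≤ 2) (B : E ≃L[𝕜] E)
    (x : E) :
    ‖x‖ ≤ 2 * max (max ‖B (B x)‖ ‖B x‖) (max ‖B.symm x‖ ‖B.symm (B.symm x)‖) := by
  obtain ⟨a, b, c, hne, hrel⟩ := exists_smul_add_smul_add_smul_eq_zero hE x (B x) (B (B x))
  have hrel' : b • x + a • B.symm x + c • B x = 0 := by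
    have := congrArg B.symm hrel
    simp only [map_add, map_smul, map_zero, B.symm_apply_apply] at this
    linear_combination (norm := module) this
  have hrel'' : c • x + b • B.symm x + a • B.symm (B.symm x) = 0 := by
    have := congrArg B.symm hrel'
    simp only [map_add, map_smul, map_zero, B.symm_apply_apply] at this
    linear_combination (norm := module) this
  set M := max (max ‖B (B x)‖ ‖B x‖) (max ‖B.symm x‖ ‖B.symm (B.symm x)‖)
  have hB2 : ‖B (B x)‖ ≤ M := le_max_of_le_left (le_max_left _ _)
  have hB1 : ‖B x‖ ≤ M := le_max_of_le_left (le_max_right _ _)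
  have hS1 : ‖B.symm x‖ ≤ M := le_max_of_le_right (le_max_left _ _)
  have hS2 : ‖B.symm (B.symm x)‖ ≤ M := le_max_of_le_right (le_max_right _ _)
  have hmax : (‖b‖ ≤ ‖a‖ ∧ ‖c‖ ≤ ‖a‖) ∨ (‖a‖ ≤ ‖b‖ ∧ ‖c‖ ≤ ‖b‖) ∨
      (‖a‖ ≤ ‖c‖ ∧ ‖b‖ ≤ ‖c‖) := by
    grind
  rcases hmax with ⟨hba, hca⟩ | ⟨hab, hcb⟩ | ⟨hac, hbc⟩
  · linarith [norm_le_norm_add_norm_of_smul_add_smul_add_smul_eq_zero hba hca hne hrel]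
  · linarith [norm_le_norm_add_norm_of_smul_add_smul_add_smul_eq_zero hab hcb (by tauto) hrel']
  · linarith [norm_le_norm_add_norm_of_smul_add_smul_add_smul_eq_zero hbc hac (by tauto) hrel'']

theorem max_pow_apply_ge_half (B : EuclideanSpace ℝ (Fin 2) ≃L[ℝ] EuclideanSpace ℝ (Fin 2))
    (x : EuclideanSpace ℝ (Fin 2)) (hx : ‖x‖ = 1) :
    (1 / 2 : ℝ) ≤
      max (max ‖B (B x)‖ ‖B x‖) (max ‖B.symm x‖ ‖B.symm (B.symm x)‖) := by
  have hdim : Module.finrank ℝ (EuclideanSpace ℝ (Fin 2)) ≤ 2 := by simp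
  linarith [norm_le_two_mul_max_norm_pow_apply hdim B x]
end

section
/- Let V : ℤ → ℝ be periodic with period T > 0, let E ∈ ℂ, and let ψ : ℤ → ℂ solve ψ(n+1) + ψ(n−1) + V(n)ψ(n) = Eψ(n). Define Ψ(n) = (ψ(n), ψ(n+1)) and the transfer matrices A(n) = [[0, 1], [−1, E − V(n)]]. Then the T-step transfer matrix B = A(T)⋯A(1) satisfies max_{a ∈ {±1, ±2}} ‖Ψ(aT)‖ ≥ (1/2)‖Ψ(0)‖. -/
open Matrix

private lemma ch2 (M : Matrix (Fin 2) (Fin 2) ℂ) :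
    M * M + M.det • (1 : Matrix (Fin 2) (Fin 2) ℂ) = M.trace • M := by
  ext i j
  fin_cases i <;> fin_cases j <;>
    simp [Matrix.mul_apply, Fin.sum_univ_two, Matrix.det_fin_two, Matrix.trace_fin_two,
      Matrix.one_apply] <;> ring

/-- For a periodic potential of period `p > 0`, any solution of the difference equation
satisfies `max_{a = ±1, ±2} ‖Ψ(a p)‖ ≥ (1/2) ‖Ψ(0)‖`, where
`‖Ψ(n)‖ = sqrt (‖ψ n‖² + ‖ψ (n+1)‖²)`. -/
theorem periodic_transfer_bound (V : ℤ → ℝ) (p : ℤ) (hp : 0 < p)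
    (hper : ∀ n : ℤ, V (n + p) = V n) (E : ℂ) (ψ : ℤ → ℂ)
    (hsol : ∀ n : ℤ, ψ (n + 1) + ψ (n - 1) + (V n : ℂ) * ψ n = E * ψ n) :
    (1 / 2 : ℝ) * Real.sqrt (‖ψ 0‖ ^ 2 + ‖ψ 1‖ ^ 2) ≤
      max
        (max (Real.sqrt (‖ψ p‖ ^ 2 + ‖ψ (p + 1)‖ ^ 2))
             (Real.sqrt (‖ψ (2 * p)‖ ^ 2 + ‖ψ (2 * p + 1)‖ ^ 2)))
        (max (Real.sqrt (‖ψ (-p)‖ ^ 2 + ‖ψ (-p + 1)‖ ^ 2))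
             (Real.sqrt (‖ψ (-(2 * p))‖ ^ 2 + ‖ψ (-(2 * p) + 1)‖ ^ 2))) := by
  classical
  set A : ℤ → Matrix (Fin 2) (Fin 2) ℂ := fun n => !![0, 1; -1, E - V n] with hA
  set vec : ℤ → (Fin 2 → ℂ) := fun n => ![ψ n, ψ (n + 1)] with hvec
  -- one step of the transfer recursion
  have hstep : ∀ n : ℤ, (A (n + 1)).mulVec (vec n) = vec (n + 1) := by
    intro n
    have h := hsol (n + 1)
    simp only [add_sub_cancel_right] at h
    funext i
    fin_cases i <;>
      simp [hA, hvec, Matrix.mulVec, dotProduct, Fin.sum_univ_two]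
    linear_combination -h
  -- iterated transfer matrices
  let F : ℕ → Matrix (Fin 2) (Fin 2) ℂ := fun m => Nat.rec 1 (fun k Mk => A ((k : ℤ) + 1) * Mk) m
  have hL1 : ∀ (s : ℤ), (∀ k : ℤ, V (s + k) = V k) → ∀ m : ℕ,
      (F m).mulVec (vec s) = vec (s + m) := by
    intro s hs m
    induction m with
    | zero => simp [F]
    | succ m ih =>
      have hFs : F (m + 1) = A ((m : ℤ) + 1) * F m := rfl
      have hAs : A ((m : ℤ) + 1) = A (s + (m : ℤ) + 1) := by
        have := hs ((m : ℤ) + 1)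
        simp [hA]
        rw [← add_assoc] at this
        rw [this]
      rw [hFs, ← Matrix.mulVec_mulVec, ih, hAs]
      have := hstep (s + (m : ℤ))
      rw [this, show s + ((m : ℕ) + 1 : ℕ) = s + (m : ℤ) + 1 by push_cast; ring]
  set q := p.toNat with hq
  have hqp : (q : ℤ) = p := Int.toNat_of_nonneg hp.le
  set B : Matrix (Fin 2) (Fin 2) ℂ := F q with hB
  have hBs : ∀ s : ℤ, (∀ k : ℤ, V (s + k) = V k) → B.mulVec (vec s) = vec (s + p) := by
    intro s hs
    rw [hB, hL1 s hs q, hqp]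
  -- periodicity at the four needed shifts
  have h0 : ∀ k : ℤ, V (0 + k) = V k := by intro k; rw [zero_add]
  have hp1 : ∀ k : ℤ, V (p + k) = V k := by
    intro k; rw [add_comm]; exact hper k
  have hm1 : ∀ k : ℤ, V (-p + k) = V k := by
    intro k
    have h := hper (-p + k)
    rw [show -p + k + p = k by ring] at h
    exact h.symm
  have hm2 : ∀ k : ℤ, V (-(2 * p) + k) = V k := by
    intro k
    have h1 := hm1 (-p + k)
    rw [show -p + (-p + k) = -(2 * p) + k by ring] at h1
    rw [h1, hm1]
  have e1 : B.mulVec (vec 0) = vec p := by rw [hBs 0 h0, zero_add]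
  have e2 : B.mulVec (vec p) = vec (2 * p) := by rw [hBs p hp1, show p + p = 2 * p by ring]
  have e3 : B.mulVec (vec (-p)) = vec 0 := by rw [hBs (-p) hm1, show -p + p = 0 by ring]
  have e4 : B.mulVec (vec (-(2 * p))) = vec (-p) := by
    rw [hBs (-(2 * p)) hm2, show -(2 * p) + p = -p by ring]
  -- det B = 1
  have hdetA : ∀ n : ℤ, (A n).det = 1 := by
    intro n; rw [hA]; simp [Matrix.det_fin_two_of]
  have hdetF : ∀ m : ℕ, (F m).det = 1 := by
    intro m
    induction m with
    | zero => simp [F]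
    | succ m ih =>
      have hFs : F (m + 1) = A ((m : ℤ) + 1) * F m := rfl
      rw [hFs, Matrix.det_mul, hdetA, ih, one_mul]
  have hdetB : B.det = 1 := hdetF q
  set t : ℂ := B.trace with ht
  have hCH : B * B + (1 : Matrix (Fin 2) (Fin 2) ℂ) = t • B := by
    have := ch2 B
    rwa [hdetB, one_smul] at this
  -- key recursion: B v = w → t • w = B w + v
  have key : ∀ v w : Fin 2 → ℂ, B.mulVec v = w → t • w = B.mulVec w + v := by
    intro v w hvw
    calc t • w = t • B.mulVec v := by rw [hvw]
    _ = (t • B).mulVec v := by rw [Matrix.smul_mulVec]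
    _ = (B * B + 1).mulVec v := by rw [hCH]
    _ = (B * B).mulVec v + (1 : Matrix (Fin 2) (Fin 2) ℂ).mulVec v := by
        rw [Matrix.add_mulVec]
    _ = B.mulVec (B.mulVec v) + v := by rw [Matrix.mulVec_mulVec, Matrix.one_mulVec]
    _ = B.mulVec w + v := by rw [hvw]
  have k0 : t • vec 0 = vec p + vec (-p) := by
    have := key (vec (-p)) (vec 0) e3
    rwa [e1] at this
  have k1 : t • vec p = vec (2 * p) + vec 0 := by
    have := key (vec 0) (vec p) e1
    rwa [e2] at this
  have km1 : t • vec (-p) = vec 0 + vec (-(2 * p)) := by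
    have := key (vec (-(2 * p))) (vec (-p)) e4
    rwa [e3] at this
  have k2 : (t * t - 2) • vec 0 = vec (2 * p) + vec (-(2 * p)) := by
    have h : (t * t) • vec 0 = vec (2 * p) + vec 0 + (vec 0 + vec (-(2 * p))) := by
      rw [← smul_smul, k0, smul_add, k1, km1]
    rw [sub_smul, h]
    have h2 : (2 : ℂ) • vec 0 = vec 0 + vec 0 := two_smul ℂ (vec 0)
    rw [h2]
    abel
  -- pass to Euclidean norms
  have hnorm : ∀ n : ℤ, Real.sqrt (‖ψ n‖ ^ 2 + ‖ψ (n + 1)‖ ^ 2)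
      = ‖((WithLp.equiv 2 (Fin 2 → ℂ)).symm (vec n))‖ := by
    intro n
    rw [EuclideanSpace.norm_eq]
    simp [hvec, Fin.sum_univ_two, PiLp.toLp_apply]
  have hI1 : t • ((WithLp.equiv 2 (Fin 2 → ℂ)).symm (vec 0)) = ((WithLp.equiv 2 (Fin 2 → ℂ)).symm (vec p))
      + ((WithLp.equiv 2 (Fin 2 → ℂ)).symm (vec (-p))) := by
    rw [WithLp.equiv_symm_apply, ← WithLp.toLp_smul, ← WithLp.toLp_add]
    exact congrArg _ k0
  have hI2 : (t * t - 2) • ((WithLp.equiv 2 (Fin 2 → ℂ)).symm (vec 0))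
      = ((WithLp.equiv 2 (Fin 2 → ℂ)).symm (vec (2 * p)))
      + ((WithLp.equiv 2 (Fin 2 → ℂ)).symm (vec (-(2 * p)))) := by
    rw [WithLp.equiv_symm_apply, ← WithLp.toLp_smul, ← WithLp.toLp_add]
    exact congrArg _ k2
  have h00 : Real.sqrt (‖ψ 0‖ ^ 2 + ‖ψ 1‖ ^ 2)
      = ‖((WithLp.equiv 2 (Fin 2 → ℂ)).symm (vec 0))‖ := by simpa using hnorm 0
  rw [h00, hnorm p, hnorm (2 * p), hnorm (-p), hnorm (-(2 * p))]
  set a0 := ‖((WithLp.equiv 2 (Fin 2 → ℂ)).symm (vec 0))‖ with ha0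
  set a1 := ‖((WithLp.equiv 2 (Fin 2 → ℂ)).symm (vec p))‖ with ha1
  set a2 := ‖((WithLp.equiv 2 (Fin 2 → ℂ)).symm (vec (2 * p)))‖ with ha2
  set a3 := ‖((WithLp.equiv 2 (Fin 2 → ℂ)).symm (vec (-p)))‖ with ha3
  set a4 := ‖((WithLp.equiv 2 (Fin 2 → ℂ)).symm (vec (-(2 * p))))‖ with ha4
  have hM1 : a1 ≤ max (max a1 a2) (max a3 a4) := le_max_of_le_left (le_max_left _ _)
  have hM2 : a2 ≤ max (max a1 a2) (max a3 a4) := le_max_of_le_left (le_max_right _ _)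
  have hM3 : a3 ≤ max (max a1 a2) (max a3 a4) := le_max_of_le_right (le_max_left _ _)
  have hM4 : a4 ≤ max (max a1 a2) (max a3 a4) := le_max_of_le_right (le_max_right _ _)
  rcases le_or_gt 1 ‖t‖ with h1 | h1
  · have hc : a0 ≤ a1 + a3 := by
      calc a0 = 1 * a0 := (one_mul _).symm
      _ ≤ ‖t‖ * a0 := by
          have : (0:ℝ) ≤ a0 := norm_nonneg _
          nlinarith
      _ = ‖t • ((WithLp.equiv 2 (Fin 2 → ℂ)).symm (vec 0))‖ := by rw [norm_smul, ha0]
      _ = ‖((WithLp.equiv 2 (Fin 2 → ℂ)).symm (vec p)) + ((WithLp.equiv 2 (Fin 2 → ℂ)).symm (vec (-p)))‖ := by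
          rw [hI1]
      _ ≤ a1 + a3 := norm_add_le _ _
    linarith
  · have htt : 1 ≤ ‖t * t - 2‖ := by
      have h2 : ‖(2 : ℂ)‖ = 2 := by norm_num
      have h3 : ‖t * t‖ < 1 := by
        rw [norm_mul]
        nlinarith [norm_nonneg t]
      have h4 : ‖(2 : ℂ)‖ - ‖t * t‖ ≤ ‖t * t - 2‖ := by
        calc ‖(2 : ℂ)‖ - ‖t * t‖ ≤ ‖(2 : ℂ) - t * t‖ := norm_sub_norm_le _ _
        _ = ‖t * t - 2‖ := norm_sub_rev _ _
      linarith
    have hc : a0 ≤ a2 + a4 := by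
      calc a0 = 1 * a0 := (one_mul _).symm
      _ ≤ ‖t * t - 2‖ * a0 := by
          have : (0:ℝ) ≤ a0 := norm_nonneg _
          nlinarith
      _ = ‖(t * t - 2) • ((WithLp.equiv 2 (Fin 2 → ℂ)).symm (vec 0))‖ := by rw [norm_smul, ha0]
      _ = ‖((WithLp.equiv 2 (Fin 2 → ℂ)).symm (vec (2 * p)))
            + ((WithLp.equiv 2 (Fin 2 → ℂ)).symm (vec (-(2 * p))))‖ := by rw [hI2]
      _ ≤ a2 + a4 := norm_add_le _ _
    linarith
end

section
/- (Theorem A) Suppose α ∈ PRP(T) and {Tⁿα}ₙ≥0 is dense in Ω. Then there exists a residual subset 𝓕 of C(Ω) (with the uniform norm) such that for every f ∈ 𝓕 there exists a residual subset Ω_f of Ω with the property that n ↦ f(Tⁿω) is a Gordon potential for every ω ∈ Ω_f. -/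
/-- `V : ℤ → ℝ` is a Gordon potential (via the `q_m` characterization): `V` is bounded and
there are `q_m → ∞` and `C > 0` with `max_{1≤n≤q_m} |V(n) - V(n ± q_m)| ≤ C m^{-q_m}`. -/
def IsGordonPotential (V : ℤ → ℝ) : Prop :=
  (∃ K, ∀ n, |V n| ≤ K) ∧
  ∃ (q : ℕ → ℕ) (C : ℝ), 0 < C ∧ Filter.Tendsto q Filter.atTop Filter.atTop ∧
    ∀ m : ℕ, 1 ≤ m → ∀ n : ℤ, 1 ≤ n → n ≤ (q m : ℤ) →
      |V n - V (n + q m)| ≤ C * (m : ℝ) ^ (-(q m : ℤ)) ∧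
      |V n - V (n - q m)| ≤ C * (m : ℝ) ^ (-(q m : ℤ))


set_option linter.unusedSectionVars false
set_option maxHeartbeats 1000000

section AuxLemmas

variable {Ω : Type*} [MetricSpace Ω] [CompactSpace Ω]

lemma hpow (T : Ω ≃ₜ Ω) (n : ℕ) : ∀ x : Ω, (T.toEquiv ^ n) x = T^[n] x := by
  induction n with
  | zero => intro x; simp
  | succ k ih =>
      intro x; rw [pow_succ, Equiv.Perm.mul_apply, Function.iterate_succ_apply]
      exact ih (T x)

lemma hzpow_nat (T : Ω ≃ₜ Ω) (n : ℕ) (x : Ω) : (T.toEquiv ^ (n : ℤ)) x = T^[n] x := by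
  rw [zpow_natCast]; exact hpow T n x

lemma hzpow_add (T : Ω ≃ₜ Ω) (a b : ℤ) (x : Ω) :
    (T.toEquiv ^ (a + b)) x = (T.toEquiv ^ a) ((T.toEquiv ^ b) x) := by
  rw [zpow_add, Equiv.Perm.mul_apply]

lemma hinv (T : Ω ≃ₜ Ω) (n : ℕ) (x : Ω) : ((T.toEquiv ^ n)⁻¹) x = (⇑T.symm)^[n] x := by
  rw [Equiv.Perm.inv_def, Equiv.symm_apply_eq, hpow]
  exact (Function.LeftInverse.iterate T.apply_symm_apply n x).symm

lemma hcont (T : Ω ≃ₜ Ω) (z : ℤ) : Continuous fun x : Ω => (T.toEquiv ^ z) x := by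
  cases z with
  | ofNat n =>
      have : (fun x : Ω => (T.toEquiv ^ (Int.ofNat n)) x) = fun x => T^[n] x := by
        funext x; rw [Int.ofNat_eq_natCast, hzpow_nat]
      rw [this]; exact T.continuous.iterate n
  | negSucc n =>
      have : (fun x : Ω => (T.toEquiv ^ (Int.negSucc n)) x) = fun x => (⇑T.symm)^[n+1] x := by
        funext x; rw [zpow_negSucc, hinv]
      rw [this]; exact T.symm.continuous.iterate (n+1)

lemma PRP_shift (T : Ω → Ω) (α : Ω) (hα : α ∈ PRPset T) (s : ℕ) :
    T^[s] α ∈ PRPset T := by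
  intro ε hε r hr
  obtain ⟨q, hq, h⟩ := hα ε hε (r + s) (by omega)
  refine ⟨q, hq, fun n hn => ?_⟩
  have hn' : n + s ≤ (r + s) * q := by
    have : s ≤ s * q := Nat.le_mul_of_pos_right s hq
    nlinarith
  have := h (n + s) hn'
  rw [← Function.iterate_add_apply, ← Function.iterate_add_apply]
  rw [show n + q + s = n + s + q by omega]
  exact this

lemma PRP_mult (T : Ω → Ω) (β : Ω) (hβ : β ∈ PRPset T) (ε : ℝ) (hε : 0 < ε)
    (r m : ℕ) (hr : 0 < r) (hm : 0 < m) :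
    ∃ q : ℕ, m ≤ q ∧ 0 < q ∧ ∀ n ≤ r * q, dist (T^[n] β) (T^[n + q] β) < ε := by
  obtain ⟨q₀, hq₀, h⟩ := hβ (ε / m) (by positivity) ((r + 1) * m) (by positivity)
  refine ⟨m * q₀, Nat.le_mul_of_pos_right m hq₀, by positivity, fun n hn => ?_⟩
  have key : ∀ j : ℕ, 0 < j → j ≤ m → dist (T^[n] β) (T^[n + j * q₀] β) < j * (ε / m) := by
    intro j
    induction j with
    | zero => intro h0; exact absurd h0 (by omega)
    | succ k ih =>
        intro _ hkm
        have hstep : dist (T^[n + k * q₀] β) (T^[n + k * q₀ + q₀] β) < ε / m := by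
          apply h
          have h1 : n ≤ r * (m * q₀) := hn
          nlinarith
        rcases Nat.eq_zero_or_pos k with hk | hk
        · subst hk; simpa using hstep
        · have := ih hk (by omega)
          calc dist (T^[n] β) (T^[n + (k+1) * q₀] β)
              ≤ dist (T^[n] β) (T^[n + k * q₀] β) + dist (T^[n + k * q₀] β) (T^[n + (k+1)*q₀] β) := by
                apply dist_triangle
            _ < k * (ε / m) + ε / m := by
                rw [show n + (k+1) * q₀ = n + k * q₀ + q₀ by ring]
                exact add_lt_add this hstep
            _ = (k + 1 : ℕ) * (ε / m) := by push_cast; ring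
  have hk := key m hm le_rfl
  have : (m:ℝ) * (ε / m) = ε := by field_simp
  rwa [this] at hk

/-- Interpolation: given finitely many distinct points and small target corrections,
there is a continuous function with prescribed values, uniformly small. -/
lemma interp (p : ℕ → Ω) (N : ℕ) (hp : ∀ i ≤ N, ∀ j ≤ N, p i = p j → i = j)
    (c : ℕ → ℝ) (δ : ℝ) (hδ : 0 ≤ δ) (hc : ∀ j ≤ N, |c j| ≤ δ) :
    ∃ u : C(Ω, ℝ), (∀ j ≤ N, u (p j) = c j) ∧ ∀ x, |u x| ≤ δ := by
  classical
  -- minimal pairwise distance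
  have hne : ∃ η > 0, ∀ i ≤ N, ∀ j ≤ N, i ≠ j → η ≤ dist (p i) (p j) := by
    rcases Nat.eq_zero_or_pos N with rfl | hNpos
    · exact ⟨1, one_pos, fun i hi j hj hij => by omega⟩
    set s := (Finset.range (N+1) ×ˢ Finset.range (N+1)).filter
        (fun ij : ℕ × ℕ => ij.1 ≠ ij.2) with hs
    have hfin : s.Nonempty := by
      refine ⟨(0, 1), ?_⟩
      simp only [hs, Finset.mem_filter, Finset.mem_product, Finset.mem_range]
      omega
    refine ⟨s.inf' hfin (fun ij => dist (p ij.1) (p ij.2)), ?_, ?_⟩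
    · rw [gt_iff_lt, Finset.lt_inf'_iff]
      rintro ⟨i, j⟩ hij
      simp only [hs, Finset.mem_filter, Finset.mem_product, Finset.mem_range] at hij
      have : p i ≠ p j := fun h => hij.2 (hp i (by omega) j (by omega) h)
      exact dist_pos.mpr this
    · intro i hi j hj hij
      have hmem : (i, j) ∈ s := by
        simp only [hs, Finset.mem_filter, Finset.mem_product, Finset.mem_range]
        exact ⟨⟨by omega, by omega⟩, hij⟩
      exact Finset.inf'_le (fun ij => dist (p ij.1) (p ij.2)) hmem
  obtain ⟨η, hη, hsep⟩ := hne
  set η' := η / 2 with hη'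
  have hη'pos : 0 < η' := by positivity
  -- the bump sum
  set u : Ω → ℝ := fun x => ∑ j ∈ Finset.range (N+1), c j * max 0 (1 - dist x (p j) / η') with hu
  have hucont : Continuous u := by
    apply continuous_finset_sum
    intro j _
    exact continuous_const.mul ((continuous_const.max
      (continuous_const.sub ((continuous_id.dist continuous_const).div_const η')))
      )
  have hbump_le : ∀ x j, max 0 (1 - dist x (p j) / η') ≤ 1 := by
    intro x j
    apply max_le (by norm_num)
    have : 0 ≤ dist x (p j) / η' := by positivity
    linarith
  have hbump_zero : ∀ x j, η' ≤ dist x (p j) → max 0 (1 - dist x (p j) / η') = 0 := by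
    intro x j h
    apply max_eq_left
    have : 1 ≤ dist x (p j) / η' := (one_le_div hη'pos).mpr h
    linarith
  refine ⟨⟨u, hucont⟩, ?_, ?_⟩
  · intro j hj
    show u (p j) = c j
    simp only [hu]
    rw [Finset.sum_eq_single j]
    · simp
    · intro i hi hij
      rw [hbump_zero (p j) i ?_, mul_zero]
      calc η' ≤ η := by rw [hη']; linarith
        _ ≤ dist (p j) (p i) := by
            rw [dist_comm]
            exact hsep i (by simpa [Finset.mem_range, Nat.lt_succ_iff] using hi) j hj hij
    · intro h
      exact absurd (Finset.mem_range.mpr (by omega)) h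
  · intro x
    show |u x| ≤ δ
    by_cases hex : ∃ j ≤ N, dist x (p j) < η'
    · obtain ⟨j₀, hj₀, hd₀⟩ := hex
      have : u x = c j₀ * max 0 (1 - dist x (p j₀) / η') := by
        simp only [hu]
        rw [Finset.sum_eq_single j₀]
        · intro i hi hij
          rw [hbump_zero x i ?_, mul_zero]
          by_contra hlt
          push_neg at hlt
          have hiN : i ≤ N := by simpa [Finset.mem_range, Nat.lt_succ_iff] using hi
          have := hsep i hiN j₀ hj₀ hij
          have htri := dist_triangle (p i) x (p j₀)
          rw [dist_comm (p i) x] at htri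
          have : η ≤ dist x (p i) + dist x (p j₀) := le_trans this htri
          rw [hη'] at hlt hd₀
          linarith
        · intro h
          exact absurd (Finset.mem_range.mpr (by omega)) h
      rw [this, abs_mul]
      calc |c j₀| * |max 0 (1 - dist x (p j₀) / η')| ≤ δ * 1 := by
            apply mul_le_mul (hc j₀ hj₀) ?_ (abs_nonneg _) hδ
            rw [abs_of_nonneg (le_max_left _ _)]
            exact hbump_le x j₀
        _ = δ := mul_one δ
    · push_neg at hex
      have : u x = 0 := by
        simp only [hu]
        apply Finset.sum_eq_zero
        intro j hj
        rw [hbump_zero x j (hex j (by simpa [Finset.mem_range, Nat.lt_succ_iff] using hj)),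
          mul_zero]
      rw [this, abs_zero]; exact hδ

def Gset (T : Ω ≃ₜ Ω) (m : ℕ) (f : C(Ω, ℝ)) : Set Ω :=
  {ω | ∃ q : ℕ, m ≤ q ∧ 1 ≤ q ∧ ∀ n : ℕ, 1 ≤ n → n ≤ q →
    |f ((T.toEquiv ^ (n : ℤ)) ω) - f ((T.toEquiv ^ ((n : ℤ) + q)) ω)| < (m : ℝ) ^ (-(q : ℤ)) ∧
    |f ((T.toEquiv ^ (n : ℤ)) ω) - f ((T.toEquiv ^ ((n : ℤ) - q)) ω)| < (m : ℝ) ^ (-(q : ℤ))}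

/-- Functions for which `Gset` meets the ball `B(x, ρ)`. -/
def Fset (T : Ω ≃ₜ Ω) (m : ℕ) (x : Ω) (ρ : ℝ) : Set C(Ω, ℝ) :=
  {f | ∃ ω, dist ω x < ρ ∧ ω ∈ Gset T m f}

lemma Gset_open (T : Ω ≃ₜ Ω) (m : ℕ) (f : C(Ω, ℝ)) : IsOpen (Gset T m f) := by
  have : Gset T m f = ⋃ q : ℕ, ⋃ (_ : m ≤ q ∧ 1 ≤ q),
      ⋂ n ∈ Finset.Icc 1 q,
        ({ω : Ω | |f ((T.toEquiv ^ (n : ℤ)) ω) - f ((T.toEquiv ^ ((n : ℤ) + q)) ω)| < (m : ℝ) ^ (-(q : ℤ))} ∩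
         {ω : Ω | |f ((T.toEquiv ^ (n : ℤ)) ω) - f ((T.toEquiv ^ ((n : ℤ) - q)) ω)| < (m : ℝ) ^ (-(q : ℤ))}) := by
    ext ω
    simp only [Gset, Set.mem_setOf_eq, Set.mem_iUnion, Set.mem_iInter, Set.mem_inter_iff,
      Finset.mem_Icc]
    constructor
    · rintro ⟨q, h1, h2, h3⟩
      exact ⟨q, ⟨h1, h2⟩, fun n hn => h3 n hn.1 hn.2⟩
    · rintro ⟨q, ⟨h1, h2⟩, h3⟩
      exact ⟨q, h1, h2, fun n hn1 hn2 => h3 n ⟨hn1, hn2⟩⟩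
  rw [this]
  refine isOpen_iUnion fun q => isOpen_iUnion fun _ => isOpen_biInter_finset fun n _ => ?_
  refine IsOpen.inter ?_ ?_ <;>
  · apply isOpen_lt ?_ continuous_const
    exact ((f.continuous.comp (hcont T _)).sub (f.continuous.comp (hcont T _))).abs

lemma Fset_open (T : Ω ≃ₜ Ω) (m : ℕ) (x : Ω) (ρ : ℝ) : IsOpen (Fset T m x ρ) := by
  have : Fset T m x ρ = ⋃ ω : Ω, ⋃ (_ : dist ω x < ρ), ⋃ q : ℕ, ⋃ (_ : m ≤ q ∧ 1 ≤ q),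
      ⋂ n ∈ Finset.Icc 1 q,
        ({f : C(Ω, ℝ) | |f ((T.toEquiv ^ (n : ℤ)) ω) - f ((T.toEquiv ^ ((n : ℤ) + q)) ω)| < (m : ℝ) ^ (-(q : ℤ))} ∩
         {f : C(Ω, ℝ) | |f ((T.toEquiv ^ (n : ℤ)) ω) - f ((T.toEquiv ^ ((n : ℤ) - q)) ω)| < (m : ℝ) ^ (-(q : ℤ))}) := by
    ext f
    simp only [Fset, Gset, Set.mem_setOf_eq, Set.mem_iUnion, Set.mem_iInter, Set.mem_inter_iff,
      Finset.mem_Icc]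
    constructor
    · rintro ⟨ω, hω, q, h1, h2, h3⟩
      exact ⟨ω, hω, q, ⟨h1, h2⟩, fun n hn => h3 n hn.1 hn.2⟩
    · rintro ⟨ω, hω, q, ⟨h1, h2⟩, h3⟩
      exact ⟨ω, hω, q, h1, h2, fun n hn1 hn2 => h3 n ⟨hn1, hn2⟩⟩
  rw [this]
  refine isOpen_iUnion fun ω => isOpen_iUnion fun _ => isOpen_iUnion fun q =>
    isOpen_iUnion fun _ => isOpen_biInter_finset fun n _ => ?_
  refine IsOpen.inter ?_ ?_ <;>
  · apply isOpen_lt ?_ continuous_const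
    have h1 : Continuous fun f : C(Ω, ℝ) => f ((T.toEquiv ^ (n : ℤ)) ω) :=
      ContinuousEvalConst.continuous_eval_const _
    have h2 : Continuous fun f : C(Ω, ℝ) => f ((T.toEquiv ^ ((n : ℤ) + q)) ω) :=
      ContinuousEvalConst.continuous_eval_const _
    have h3 : Continuous fun f : C(Ω, ℝ) => f ((T.toEquiv ^ ((n : ℤ) - q)) ω) :=
      ContinuousEvalConst.continuous_eval_const _
    first
    | exact (h1.sub h2).abs
    | exact (h1.sub h3).abs

lemma Fset_dense(T : Ω ≃ₜ Ω) (α : Ω) (hα : α ∈ PRPset ⇑T)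
    (hdense : Dense (Set.range fun n : ℕ => (⇑T)^[n] α))
    (hinj : ∀ i j : ℕ, (⇑T)^[i] α = (⇑T)^[j] α → i = j)
    (m : ℕ) (hm : 1 ≤ m) (x : Ω) (ρ : ℝ) (hρ : 0 < ρ) :
    Dense (Fset T m x ρ) := by
  rw [Metric.dense_iff]
  intro f r hr
  set δ8 := r / 8 with hδ8
  have hδ8pos : 0 < δ8 := by positivity
  obtain ⟨ε₁, hε₁, hf⟩ := Metric.uniformContinuous_iff.mp
    (CompactSpace.uniformContinuous_of_continuous f.continuous) δ8 hδ8pos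
  set ε := min ε₁ (ρ / 2) with hε
  have hεpos : 0 < ε := lt_min hε₁ (by positivity)
  have hεineq1 : ε ≤ ε₁ := min_le_left _ _
  have hεineq2 : ε ≤ ρ / 2 := min_le_right _ _
  -- find β in B(x, ρ/2) on the orbit
  obtain ⟨y, hy1, hy2⟩ := Metric.dense_iff.mp hdense x (ρ / 2) (by positivity)
  obtain ⟨s, rfl⟩ := hy2
  set β := (⇑T)^[s] α with hβdef
  have hβx : dist β x < ρ / 2 := Metric.mem_ball.mp hy1
  have hβ : β ∈ PRPset ⇑T := PRP_shift ⇑T α hα s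
  obtain ⟨q, hmq, hq, H⟩ := PRP_mult ⇑T β hβ ε hεpos 3 m (by norm_num) hm
  set p : ℕ → Ω := fun j => (⇑T)^[j] β with hp
  have hpadd : ∀ a b : ℕ, (⇑T)^[a] (p b) = p (a + b) := by
    intro a b
    simp only [hp, hβdef, ← Function.iterate_add_apply]
    congr 1
    omega
  have hpinj : ∀ i ≤ 3*q, ∀ j ≤ 3*q, p i = p j → i = j := by
    intro i _ j _ hij
    simp only [hp, hβdef, ← Function.iterate_add_apply] at hij
    have := hinj (i + s) (j + s) hij
    omega
  -- variation along classes
  have hvar : ∀ t : ℕ, ∀ j : ℕ, j + t * q ≤ 3 * q → |f (p (j + t * q)) - f (p j)| ≤ t * δ8 := by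
    intro t
    induction t with
    | zero => intro j _; simp
    | succ k ih =>
        intro j hj
        have hkq : k * q ≤ (k+1) * q := Nat.mul_le_mul_right q (Nat.le_succ k)
        have hle : j + k * q ≤ 3 * q := by omega
        have h1 : |f (p (j + k * q)) - f (p j)| ≤ k * δ8 := ih j hle
        have h2 : dist (p (j + k * q)) (p (j + k * q + q)) < ε := H (j + k * q) hle
        have h2' : dist (p (j + k * q + q)) (p (j + k * q)) < ε := by
          rw [dist_comm]; exact h2
        have h3 : |f (p (j + k * q + q)) - f (p (j + k * q))| < δ8 := by
          rw [← Real.dist_eq]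
          exact hf (lt_of_lt_of_le h2' hεineq1)
        have : j + (k+1) * q = j + k * q + q := by ring
        rw [this]
        calc |f (p (j + k * q + q)) - f (p j)|
            ≤ |f (p (j + k * q + q)) - f (p (j + k * q))| + |f (p (j + k * q)) - f (p j)| := by
              have := abs_sub_le (f (p (j + k * q + q))) (f (p (j + k * q))) (f (p j))
              exact this
          _ ≤ δ8 + k * δ8 := add_le_add h3.le h1
          _ = (k + 1 : ℕ) * δ8 := by push_cast; ring
  have hvar' : ∀ j ≤ 3 * q, |f (p (j % q)) - f (p j)| ≤ 3 * δ8 := by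
    intro j hj
    have hdiv : j % q + j / q * q = j := Nat.mod_add_div' j q
    have ht : j / q ≤ 3 := by
      have := Nat.div_le_div_right (c := q) hj
      rwa [Nat.mul_div_cancel 3 hq] at this
    have hle : j % q + (j / q) * q ≤ 3 * q := by rw [hdiv]; exact hj
    have h1 := hvar (j / q) (j % q) hle
    rw [hdiv] at h1
    rw [abs_sub_comm]
    refine h1.trans ?_
    have : ((j / q : ℕ) : ℝ) ≤ 3 := by exact_mod_cast ht
    nlinarith
  set c : ℕ → ℝ := fun j => f (p (j % q)) - f (p j) with hc
  obtain ⟨u, hu1, hu2⟩ := interp p (3 * q) hpinj c (3 * δ8) (by positivity)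
    (fun j hj => hvar' j hj)
  set g := f + u with hg
  have hgval : ∀ j ≤ 3 * q, g (p j) = f (p (j % q)) := by
    intro j hj
    show f (p j) + u (p j) = f (p (j % q))
    rw [hu1 j hj, hc]; ring
  refine ⟨g, Metric.mem_ball.mpr ?_, ?_⟩
  · -- dist g f < r
    have hdist : dist g f ≤ 3 * δ8 := by
      rw [ContinuousMap.dist_le (by positivity)]
      intro z
      have hz : dist (g z) (f z) = |u z| := by
        simp only [hg, ContinuousMap.add_apply, Real.dist_eq, add_sub_cancel_left]
      rw [hz]; exact hu2 z
    have h3r : (3:ℝ) * δ8 < r := by rw [hδ8]; linarith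
    linarith
  · -- g ∈ Fset
    refine ⟨p q, ?_, q, hmq, hq, ?_⟩
    · calc dist (p q) x ≤ dist (p q) (p 0) + dist (p 0) x := dist_triangle _ _ _
        _ < ε + ρ / 2 := by
            apply add_lt_add_of_lt_of_le
            · rw [dist_comm]
              have := H 0 (by omega)
              simpa [hp] using this
            · have : p 0 = β := by simp [hp]
              rw [this]; exact hβx.le
        _ ≤ ρ := by linarith
    · intro n hn1 hn2
      have hmpos : (0:ℝ) < (m:ℝ) := by exact_mod_cast hm
      have hposbound : (0:ℝ) < (m : ℝ) ^ (-(q : ℤ)) := zpow_pos hmpos _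
      have e1 : (T.toEquiv ^ (n : ℤ)) (p q) = p (n + q) := by
        rw [hzpow_nat]; exact hpadd n q
      have e2 : (T.toEquiv ^ ((n : ℤ) + q)) (p q) = p (n + 2 * q) := by
        have : ((n : ℤ) + q) = ((n + q : ℕ) : ℤ) := by push_cast; ring
        rw [this, hzpow_nat]
        have := hpadd (n + q) q
        rw [this]
        congr 1
        omega
      have e3 : (T.toEquiv ^ ((n : ℤ) - q)) (p q) = p n := by
        have hωβ : p q = (T.toEquiv ^ (q : ℤ)) β := by
          rw [hzpow_nat]
        rw [hωβ, ← hzpow_add, sub_add_cancel, hzpow_nat]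
      rw [e1, e2, e3]
      have hb1 : n + q ≤ 3 * q := by omega
      have hb2 : n + 2 * q ≤ 3 * q := by omega
      have hb3 : n ≤ 3 * q := by omega
      rw [hgval _ hb1, hgval _ hb2, hgval _ hb3]
      have r1 : (n + q) % q = n % q := Nat.add_mod_right n q
      have r2 : (n + 2 * q) % q = n % q := by
        rw [show n + 2 * q = n + q + q by ring, Nat.add_mod_right, Nat.add_mod_right]
      rw [r1, r2]
      constructor <;> simpa using hposbound

end AuxLemmas

/-- Theorem A. -/
theorem theoremA {Ω : Type*} [MetricSpace Ω] [CompactSpace Ω] (T : Ω ≃ₜ Ω) (α : Ω)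
    (hα : α ∈ PRPset ⇑T)
    (hdense : Dense (Set.range fun n : ℕ => (⇑T)^[n] α)) :
    ∃ F : Set C(Ω, ℝ), F ∈ residual C(Ω, ℝ) ∧
      ∀ f ∈ F, ∃ Ωf : Set Ω, Ωf ∈ residual Ω ∧
        ∀ ω ∈ Ωf, IsGordonPotential (fun n : ℤ => f ((T.toEquiv ^ n) ω)) := by
  classical
  by_cases hinj : ∀ i j : ℕ, (⇑T)^[i] α = (⇑T)^[j] α → i = j
  · -- aperiodic case
    have : Nonempty Ω := ⟨α⟩
    obtain ⟨D, Dcount, Ddense⟩ := TopologicalSpace.exists_countable_dense Ω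
    obtain ⟨e, he⟩ := Set.Countable.exists_eq_range Dcount (Ddense.nonempty)
    have hedense : Dense (Set.range e) := by rw [← he]; exact Ddense
    refine ⟨⋂ (m : ℕ) (i : ℕ) (k : ℕ), Fset T (m + 1) (e i) (1 / (k + 1)), ?_, ?_⟩
    · refine countable_iInter_mem.mpr fun m => countable_iInter_mem.mpr fun i =>
        countable_iInter_mem.mpr fun k => ?_
      refine residual_of_dense_open (Fset_open T (m+1) (e i) (1/(k+1))) ?_
      exact Fset_dense T α hα hdense hinj (m+1) (by omega) (e i) (1/(k+1)) (by positivity)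
    · intro f hf
      have hfF : ∀ m i k : ℕ, f ∈ Fset T (m + 1) (e i) (1 / (k + 1)) := by
        intro m i k
        simp only [Set.mem_iInter] at hf
        exact hf m i k
      refine ⟨⋂ (m : ℕ), Gset T (m + 1) f, ?_, ?_⟩
      · refine countable_iInter_mem.mpr fun m => ?_
        refine residual_of_dense_open (Gset_open T (m+1) f) ?_
        rw [Metric.dense_iff]
        intro y r hr
        obtain ⟨z, hz1, hz2⟩ := Metric.dense_iff.mp hedense y (r / 2) (by positivity)
        obtain ⟨i, rfl⟩ := hz2
        obtain ⟨k, hk⟩ := exists_nat_one_div_lt (show (0:ℝ) < r/2 by positivity)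
        obtain ⟨ω, hω1, hω2⟩ := hfF m i k
        refine ⟨ω, Metric.mem_ball.mpr ?_, hω2⟩
        have h1 : dist ω (e i) < r / 2 := lt_trans hω1 hk
        have h2 : dist (e i) y < r / 2 := Metric.mem_ball.mp hz1
        calc dist ω y ≤ dist ω (e i) + dist (e i) y := dist_triangle _ _ _
          _ < r / 2 + r / 2 := add_lt_add h1 h2
          _ = r := by ring
      · intro ω hω
        have hG : ∀ m' : ℕ, 1 ≤ m' → ω ∈ Gset T m' f := by
          intro m' hm'
          simp only [Set.mem_iInter] at hω
          have := hω (m' - 1)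
          rwa [show m' - 1 + 1 = m' by omega] at this
        constructor
        · exact ⟨‖f‖, fun n => ContinuousMap.norm_coe_le_norm f _⟩
        · have H : ∀ m : ℕ, ∃ q : ℕ, max 1 m ≤ q ∧ 1 ≤ q ∧ ∀ n : ℕ, 1 ≤ n → n ≤ q →
              |f ((T.toEquiv ^ (n : ℤ)) ω) - f ((T.toEquiv ^ ((n : ℤ) + q)) ω)|
                < ((max 1 m : ℕ) : ℝ) ^ (-(q : ℤ)) ∧
              |f ((T.toEquiv ^ (n : ℤ)) ω) - f ((T.toEquiv ^ ((n : ℤ) - q)) ω)|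
                < ((max 1 m : ℕ) : ℝ) ^ (-(q : ℤ)) :=
            fun m => hG (max 1 m) (le_max_left _ _)
          refine ⟨fun m => (H m).choose, 1, one_pos, ?_, ?_⟩
          · refine Filter.tendsto_atTop_mono (fun m => ?_) Filter.tendsto_id
            exact le_trans (le_max_right 1 m) (H m).choose_spec.1
          · intro m hm n hn1 hn2
            have hmax : max 1 m = m := max_eq_right hm
            obtain ⟨hq1, hq2, hq3⟩ := (H m).choose_spec
            set cq := (H m).choose with hcq
            lift n to ℕ using (by linarith : (0:ℤ) ≤ n) with n'
            have hn1' : 1 ≤ n' := by exact_mod_cast hn1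
            have hn2' : n' ≤ cq := by
              have h2 : (n' : ℤ) ≤ (cq : ℤ) := hn2
              exact_mod_cast h2
            have hb := hq3 n' hn1' hn2'
            have hbnd : ((max 1 m : ℕ) : ℝ) ^ (-(cq : ℤ)) = (m : ℝ) ^ (-(cq : ℤ)) := by
              rw [hmax]
            simp only [one_mul]
            rw [← hbnd]
            exact ⟨hb.1.le, hb.2.le⟩
  · -- periodic case
    push_neg at hinj
    obtain ⟨i, j, hij, hne⟩ := hinj
    -- wlog i < j
    have hper : ∃ a b : ℕ, a < b ∧ (⇑T)^[a] α = (⇑T)^[b] α := by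
      rcases lt_or_gt_of_ne hne with h | h
      · exact ⟨i, j, h, hij⟩
      · exact ⟨j, i, h, hij.symm⟩
    obtain ⟨a, b, hab, heq⟩ := hper
    set pp := b - a with hpp
    have hpp1 : 1 ≤ pp := by omega
    -- T^[pp] = id
    have hfix : ∀ z : Ω, (⇑T)^[pp] z = z := by
      have htail : ∀ n : ℕ, (⇑T)^[pp] ((⇑T)^[n + a] α) = (⇑T)^[n + a] α := by
        intro n
        have h1 : (⇑T)^[pp] ((⇑T)^[n + a] α) = (⇑T)^[n] ((⇑T)^[pp + a] α) := by
          rw [← Function.iterate_add_apply, ← Function.iterate_add_apply]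
          congr 1
          omega
        have h2 : (⇑T)^[pp + a] α = (⇑T)^[a] α := by
          rw [show pp + a = b by omega]
          exact heq.symm
        rw [h1, h2, ← Function.iterate_add_apply]
      have hclosed : IsClosed {z : Ω | (⇑T)^[pp] z = z} :=
        isClosed_eq (T.continuous.iterate pp) continuous_id
      have hdense2 : Dense {z : Ω | (⇑T)^[pp] z = z} := by
        rw [dense_iff_inter_open]
        rintro U hU ⟨u, hu⟩
        have hW : IsOpen ((⇑T)^[a] ⁻¹' U) := (T.continuous.iterate a).isOpen_preimage U hU
        have hWne : ((⇑T)^[a] ⁻¹' U).Nonempty := by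
          refine ⟨(⇑T.symm)^[a] u, ?_⟩
          show (⇑T)^[a] ((⇑T.symm)^[a] u) ∈ U
          rw [Function.LeftInverse.iterate T.apply_symm_apply a u]
          exact hu
        obtain ⟨w, hw1, hw2⟩ := hdense.inter_open_nonempty _ hW hWne
        obtain ⟨n, rfl⟩ := hw2
        refine ⟨(⇑T)^[n + a] α, ?_, htail n⟩
        have : (⇑T)^[a] ((⇑T)^[n] α) ∈ U := hw1
        rwa [← Function.iterate_add_apply, Nat.add_comm a n] at this
      intro z
      have : z ∈ closure {z : Ω | (⇑T)^[pp] z = z} := hdense2 z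
      rwa [hclosed.closure_eq] at this
    have hfixk : ∀ k : ℕ, ∀ z : Ω, (⇑T)^[pp * k] z = z := by
      intro k
      induction k with
      | zero => intro z; simp
      | succ k ih =>
          intro z
          rw [show pp * (k + 1) = pp * k + pp by ring, Function.iterate_add_apply, hfix z, ih z]
    refine ⟨Set.univ, Filter.univ_mem, fun f _ => ⟨Set.univ, Filter.univ_mem, fun ω _ => ?_⟩⟩
    constructor
    · exact ⟨‖f‖, fun n => ContinuousMap.norm_coe_le_norm f _⟩
    · refine ⟨fun m => pp * m, 1, one_pos, ?_, ?_⟩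
      · refine Filter.tendsto_atTop_mono (fun m => ?_) Filter.tendsto_id
        exact Nat.le_mul_of_pos_left m (by omega)
      · intro m hm n hn1 hn2
        have hmpos : (0:ℝ) < (m:ℝ) := by exact_mod_cast hm
        have hbpos : (0:ℝ) < (m : ℝ) ^ (-((pp * m : ℕ) : ℤ)) := zpow_pos hmpos _
        have hzid : ∀ z : Ω, (T.toEquiv ^ ((pp * m : ℕ) : ℤ)) z = z := by
          intro z
          rw [hzpow_nat]
          exact hfixk m z
        have e1 : (T.toEquiv ^ (n + ((pp * m : ℕ) : ℤ))) ω = (T.toEquiv ^ n) ω := by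
          rw [hzpow_add, hzid]
        have e2 : (T.toEquiv ^ (n - ((pp * m : ℕ) : ℤ))) ω = (T.toEquiv ^ n) ω := by
          conv_rhs => rw [show n = n - ((pp * m : ℕ) : ℤ) + ((pp * m : ℕ) : ℤ) by ring]
          rw [hzpow_add, hzid]
        simp only [one_mul]
        constructor
        · rw [e1, sub_self, abs_zero]
          exact hbpos.le
        · rw [e2, sub_self, abs_zero]
          exact hbpos.le
end

section
/- (Theorem B) Suppose the dynamical system (Ω, T) satisfies TRP (i.e., PRP(T) is dense in Ω). Then there exists a residual subset 𝓕 of C(Ω) such that for every f ∈ 𝓕 there exists a residual subset Ω_f of Ω with the property that n ↦ f(Tⁿω) is a Gordon potential for every ω ∈ Ω_f. -/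
open Filter Metric Function

section ThmBAux
variable {Ω : Type*} [MetricSpace Ω] [CompactSpace Ω]

/-- ℤ-power action of a homeomorphism. -/
def apowB (T : Ω ≃ₜ Ω) (k : ℤ) (ω : Ω) : Ω := (T.toEquiv ^ k) ω

lemma apowB_natCast (T : Ω ≃ₜ Ω) (k : ℕ) (ω : Ω) : apowB T (k : ℤ) ω = (⇑T)^[k] ω := by
  rw [apowB, zpow_natCast, ← Equiv.Perm.iterate_eq_pow]
  rfl

lemma apowB_add (T : Ω ≃ₜ Ω) (a b : ℤ) (ω : Ω) :
    apowB T (a + b) ω = apowB T a (apowB T b ω) := by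
  rw [apowB, zpow_add, Equiv.Perm.mul_apply]; rfl

lemma apowB_continuous (T : Ω ≃ₜ Ω) (k : ℤ) : Continuous (apowB T k) := by
  rcases k with n | n
  · have h : apowB T (Int.ofNat n) = fun ω => (⇑T)^[n] ω := funext fun ω => apowB_natCast T n ω
    rw [h]
    exact T.continuous.iterate n
  · have h : ∀ ω, apowB T (Int.negSucc n) ω = (⇑T.symm)^[n+1] ω := by
      intro ω
      rw [apowB, zpow_negSucc, ← inv_pow, ← Equiv.Perm.iterate_eq_pow]
      rfl
    rw [funext h]
    exact T.symm.continuous.iterate (n+1)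

/-- Strict Gordon-type inequalities at scale `q`, threshold `M^{-q}`. -/
def goodAt (T : Ω ≃ₜ Ω) (f : C(Ω, ℝ)) (M q : ℕ) (ω : Ω) : Prop :=
  ∀ n ∈ Finset.Icc 1 q,
    |f (apowB T (n : ℤ) ω) - f (apowB T ((n : ℤ) + q) ω)| < (M : ℝ) ^ (-(q : ℤ)) ∧
    |f (apowB T (n : ℤ) ω) - f (apowB T ((n : ℤ) - q) ω)| < (M : ℝ) ^ (-(q : ℤ))

def wsetB (T : Ω ≃ₜ Ω) (f : C(Ω, ℝ)) (M : ℕ) : Set Ω :=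
  {ω | ∃ q : ℕ, M ≤ q ∧ 1 ≤ q ∧ goodAt T f M q ω}

lemma isOpen_goodAt (T : Ω ≃ₜ Ω) (f : C(Ω, ℝ)) (M q : ℕ) :
    IsOpen {ω : Ω | goodAt T f M q ω} := by
  have : {ω : Ω | goodAt T f M q ω} =
      ⋂ n ∈ Finset.Icc 1 q,
        ({ω : Ω | |f (apowB T (n : ℤ) ω) - f (apowB T ((n : ℤ) + q) ω)| < (M : ℝ) ^ (-(q : ℤ))} ∩
         {ω : Ω | |f (apowB T (n : ℤ) ω) - f (apowB T ((n : ℤ) - q) ω)| < (M : ℝ) ^ (-(q : ℤ))}) := by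
    ext ω; simp [goodAt, forall_and]
  rw [this]
  refine isOpen_biInter_finset fun n _ => IsOpen.inter ?_ ?_ <;>
  · apply isOpen_lt _ continuous_const
    exact ((f.continuous.comp (apowB_continuous T _)).sub
      (f.continuous.comp (apowB_continuous T _))).abs

lemma isOpen_wsetB (T : Ω ≃ₜ Ω) (f : C(Ω, ℝ)) (M : ℕ) : IsOpen (wsetB T f M) := by
  have : wsetB T f M = ⋃ q ∈ {q : ℕ | M ≤ q ∧ 1 ≤ q}, {ω : Ω | goodAt T f M q ω} := by
    ext ω
    simp only [Set.mem_setOf_eq, Set.mem_iUnion, wsetB, exists_prop]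
    tauto
  rw [this]
  exact isOpen_biUnion fun q _ => isOpen_goodAt T f M q

lemma isOpen_osetB (T : Ω ≃ₜ Ω) (M : ℕ) (U : Set Ω) :
    IsOpen {f : C(Ω, ℝ) | ∃ ω ∈ U, ω ∈ wsetB T f M} := by
  have : {f : C(Ω, ℝ) | ∃ ω ∈ U, ω ∈ wsetB T f M} =
      ⋃ ω ∈ U, ⋃ q ∈ {q : ℕ | M ≤ q ∧ 1 ≤ q}, {f : C(Ω, ℝ) | goodAt T f M q ω} := by
    ext f
    simp only [Set.mem_setOf_eq, Set.mem_iUnion, wsetB, exists_prop]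
    tauto
  rw [this]
  refine isOpen_biUnion fun ω _ => isOpen_biUnion fun q _ => ?_
  have : {f : C(Ω, ℝ) | goodAt T f M q ω} =
      ⋂ n ∈ Finset.Icc 1 q,
        ({f : C(Ω, ℝ) | |f (apowB T (n : ℤ) ω) - f (apowB T ((n : ℤ) + q) ω)| < (M : ℝ) ^ (-(q : ℤ))} ∩
         {f : C(Ω, ℝ) | |f (apowB T (n : ℤ) ω) - f (apowB T ((n : ℤ) - q) ω)| < (M : ℝ) ^ (-(q : ℤ))}) := by
    ext f; simp [goodAt, forall_and]
  rw [this]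
  refine isOpen_biInter_finset fun n _ => IsOpen.inter ?_ ?_ <;>
  · apply isOpen_lt _ continuous_const
    exact ((continuous_eval_const _).sub (continuous_eval_const _)).abs
lemma dense_stepB (T : Ω ≃ₜ Ω) (htrp : Dense (PRPset ⇑T)) (f : C(Ω, ℝ)) {ε : ℝ} (hε : 0 < ε)
    {M : ℕ} (hM : 1 ≤ M) (z : Ω) {r : ℝ} (hr : 0 < r) :
    ∃ g : C(Ω, ℝ), dist g f < ε ∧ ∃ ω ∈ Metric.ball z r, ω ∈ wsetB T g M := by
  classical
  have hMpos : (0 : ℝ) < (M : ℝ) := by exact_mod_cast hM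
  obtain ⟨ω₀, hω₀prp, hω₀ball⟩ := htrp.exists_mem_open isOpen_ball ⟨z, mem_ball_self hr⟩
  by_cases hper : ∃ p, 1 ≤ p ∧ (⇑T)^[p] ω₀ = ω₀
  · -- periodic case : g = f works
    obtain ⟨p, hp1, hpfix⟩ := hper
    have hq1 : 1 ≤ p * M := Nat.one_le_iff_ne_zero.2 (by positivity)
    have hqM : M ≤ p * M := Nat.le_mul_of_pos_left M hp1
    refine ⟨f, by simpa using hε, ω₀, hω₀ball, p * M, hqM, hq1, ?_⟩
    have hfix : apowB T ((p * M : ℕ) : ℤ) ω₀ = ω₀ := by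
      rw [apowB_natCast, Function.iterate_mul]
      exact Function.iterate_fixed hpfix M
    have hfixneg : apowB T (-((p * M : ℕ) : ℤ)) ω₀ = ω₀ := by
      conv_lhs => rw [← hfix, ← apowB_add]
      simp [apowB]
    have hpow : (0 : ℝ) < (M : ℝ) ^ (-((p * M : ℕ) : ℤ)) := zpow_pos hMpos _
    intro n hn
    have h1 : apowB T ((n : ℤ) + (p * M : ℕ)) ω₀ = apowB T (n : ℤ) ω₀ := by
      rw [apowB_add, hfix]
    have h2 : apowB T ((n : ℤ) - (p * M : ℕ)) ω₀ = apowB T (n : ℤ) ω₀ := by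
      rw [sub_eq_add_neg, apowB_add, hfixneg]
    rw [h1, h2]
    simp only [sub_self, abs_zero]
    exact ⟨hpow, hpow⟩
  · -- aperiodic case
    push_neg at hper
    have hinj : ∀ a b : ℕ, (⇑T)^[a] ω₀ = (⇑T)^[b] ω₀ → a = b := by
      have key : ∀ a b : ℕ, a < b → (⇑T)^[a] ω₀ ≠ (⇑T)^[b] ω₀ := by
        intro a b hab heq
        have hiter : (⇑T)^[a] ((⇑T)^[b - a] ω₀) = (⇑T)^[a] ω₀ := by
          rw [← Function.iterate_add_apply, Nat.add_sub_cancel' hab.le]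
          exact heq.symm
        have hinj' : Function.Injective ((⇑T)^[a]) := T.injective.iterate a
        exact hper (b - a) (by omega) (hinj' hiter)
      intro a b h
      rcases lt_trichotomy a b with hab | hab | hab
      · exact absurd h (key a b hab)
      · exact hab
      · exact absurd h.symm (key b a hab)
    -- uniform continuity
    have huc : UniformContinuous f := CompactSpace.uniformContinuous_of_continuous f.continuous
    obtain ⟨δ₀, hδ₀pos, hδ₀⟩ := Metric.uniformContinuous_iff.mp huc (ε / 4) (by positivity)
    have hδ₀' : ∀ x y : Ω, dist x y < δ₀ → |f x - f y| < ε / 4 := by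
      intro x y h
      have := hδ₀ h
      rwa [Real.dist_eq] at this
    set η : ℝ := (r - dist ω₀ z) / 2 with hηdef
    have hω₀z : dist ω₀ z < r := mem_ball.mp hω₀ball
    have hηpos : 0 < η := by simp only [hηdef]; linarith
    set S : Finset ℝ :=
      insert η (insert (δ₀ / 2) ((Finset.Ico 1 M).image fun k => dist ω₀ ((⇑T)^[k] ω₀))) with hSdef
    have hSne : S.Nonempty := ⟨η, by simp [hSdef]⟩
    set ε' : ℝ := S.min' hSne with hε'def
    have hε'pos : 0 < ε' := by
      rw [hε'def, Finset.lt_min'_iff]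
      intro y hy
      simp only [hSdef, Finset.mem_insert, Finset.mem_image, Finset.mem_Ico] at hy
      rcases hy with rfl | rfl | ⟨k, ⟨hk1, _⟩, rfl⟩
      · exact hηpos
      · positivity
      · rw [dist_pos]
        exact fun h => hper k hk1 h.symm
    have hε'η : ε' ≤ η := Finset.min'_le _ _ (by simp [hSdef])
    have hε'δ : ε' ≤ δ₀ / 2 := Finset.min'_le _ _ (by simp [hSdef])
    have hε'k : ∀ k, 1 ≤ k → k < M → ε' ≤ dist ω₀ ((⇑T)^[k] ω₀) := by
      intro k hk1 hk2
      refine Finset.min'_le _ _ ?_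
      simp only [hSdef, Finset.mem_insert, Finset.mem_image, Finset.mem_Ico]
      exact Or.inr (Or.inr ⟨k, ⟨hk1, hk2⟩, rfl⟩)
    obtain ⟨Q, hQpos, hQ⟩ := hω₀prp ε' hε'pos 2 (by norm_num)
    have hQM : M ≤ Q := by
      by_contra hcon
      push_neg at hcon
      have h0 := hQ 0 (Nat.zero_le _)
      simp only [Function.iterate_zero_apply, Nat.zero_add] at h0
      exact absurd h0 (not_lt.mpr (hε'k Q hQpos hcon))
    set x : ℕ → Ω := fun s => (⇑T)^[s] ω₀ with hxdef
    set P : Finset ℕ := Finset.Icc 1 (3 * Q) with hPdef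
    set D : Finset ℝ :=
      ((P ×ˢ P).filter fun p => p.1 ≠ p.2).image fun p => dist (x p.1) (x p.2) with hDdef
    have h12P : (1 : ℕ) ∈ P ∧ (2 : ℕ) ∈ P := by
      constructor <;> simp [hPdef] <;> omega
    have hDne : D.Nonempty := by
      refine ⟨dist (x 1) (x 2), ?_⟩
      simp only [hDdef, Finset.mem_image, Finset.mem_filter, Finset.mem_product]
      exact ⟨(1, 2), ⟨⟨h12P.1, h12P.2⟩, by norm_num⟩, rfl⟩
    set δm : ℝ := D.min' hDne with hδmdef
    have hδmpos : 0 < δm := by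
      rw [hδmdef, Finset.lt_min'_iff]
      intro y hy
      simp only [hDdef, Finset.mem_image, Finset.mem_filter, Finset.mem_product] at hy
      obtain ⟨⟨a, b⟩, ⟨_, hab⟩, rfl⟩ := hy
      rw [dist_pos]
      exact fun h => hab (hinj a b h)
    have hsep : ∀ a ∈ P, ∀ b ∈ P, a ≠ b → δm ≤ dist (x a) (x b) := by
      intro a ha b hb hab
      refine Finset.min'_le _ _ ?_
      simp only [hDdef, Finset.mem_image, Finset.mem_filter, Finset.mem_product]
      exact ⟨(a, b), ⟨⟨ha, hb⟩, hab⟩, rfl⟩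
    -- bump functions
    set φ : ℕ → Ω → ℝ := fun s y => max 0 (1 - dist y (x s) * (2 / δm)) with hφdef
    have hφcont : ∀ s, Continuous (φ s) :=
      fun s => continuous_const.max
        (continuous_const.sub ((continuous_id.dist continuous_const).mul continuous_const))
    have hφ1 : ∀ s, φ s (x s) = 1 := by intro s; simp [hφdef]
    have hφ0 : ∀ s y, δm / 2 ≤ dist y (x s) → φ s y = 0 := by
      intro s y h
      rw [hφdef]
      refine max_eq_left ?_
      have h2 : (0:ℝ) < 2 / δm := by positivity
      have h3 : δm / 2 * (2 / δm) ≤ dist y (x s) * (2 / δm) :=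
        mul_le_mul_of_nonneg_right h h2.le
      have h4 : δm / 2 * (2 / δm) = 1 := by field_simp
      linarith
    have hφ01 : ∀ s y, 0 ≤ φ s y ∧ φ s y ≤ 1 := by
      intro s y
      refine ⟨le_max_left _ _, max_le (by norm_num) ?_⟩
      have : 0 ≤ dist y (x s) * (2 / δm) := by positivity
      linarith
    set idx : ℕ → ℕ := fun s => (s - 1) % Q + 1 with hidxdef
    set c : ℕ → ℝ := fun s => f (x (idx s)) - f (x s) with hcdef
    have hchain : ∀ i ≤ 2 * Q, dist (x i) (x (i + Q)) < ε' := fun i hi => hQ i hi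
    have hxclose : ∀ s ∈ P, dist (x (idx s)) (x s) < δ₀ := by
      intro s hs
      obtain ⟨hs1, hs3⟩ := Finset.mem_Icc.mp hs
      have hidx : idx s = (s - 1) % Q + 1 := rfl
      have him : (s - 1) % Q < Q := Nat.mod_lt _ hQpos
      have hiQ : idx s ≤ Q := by omega
      have hi1 : 1 ≤ idx s := by omega
      have hmain : s = idx s ∨ s = idx s + Q ∨ s = idx s + Q + Q := by
        have h1 : (s - 1) % Q + Q * ((s - 1) / Q) = s - 1 := Nat.mod_add_div _ _
        have h2 : (s - 1) / Q < 3 := Nat.div_lt_of_lt_mul (by omega)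
        obtain ⟨d, hd⟩ : ∃ d, (s - 1) / Q = d := ⟨_, rfl⟩
        rw [hd] at h1 h2
        interval_cases d <;> omega
      rcases hmain with hcase | hcase | hcase
      · have hxx : x (idx s) = x s := by rw [← hcase]
        rw [hxx]
        simpa using hδ₀pos
      · have h := hchain (idx s) (by omega)
        rw [← hcase] at h
        calc dist (x (idx s)) (x s) < ε' := h
        _ ≤ δ₀ / 2 := hε'δ
        _ < δ₀ := by linarith
      · have htri : dist (x (idx s)) (x (idx s + Q + Q)) < δ₀ := by
          calc dist (x (idx s)) (x (idx s + Q + Q))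
              ≤ dist (x (idx s)) (x (idx s + Q)) + dist (x (idx s + Q)) (x (idx s + Q + Q)) :=
                dist_triangle _ _ _
          _ < ε' + ε' := add_lt_add (hchain (idx s) (by omega)) (hchain (idx s + Q) (by omega))
          _ ≤ δ₀ := by linarith
        rwa [← hcase] at htri
    have hc : ∀ s ∈ P, |c s| ≤ ε / 4 := fun s hs => (hδ₀' _ _ (hxclose s hs)).le
    set h : Ω → ℝ := fun y => ∑ s ∈ P, c s * φ s y with hhdef
    have hcont : Continuous h := continuous_finset_sum _ fun s _ => continuous_const.mul (hφcont s)
    have hbound : ∀ y, |h y| ≤ ε / 4 := by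
      intro y
      by_cases hex : ∃ s₀ ∈ P, dist y (x s₀) < δm / 2
      · obtain ⟨s₀, hs₀P, hs₀⟩ := hex
        have hsum : h y = c s₀ * φ s₀ y := by
          refine Finset.sum_eq_single_of_mem s₀ hs₀P fun s hs hne => ?_
          have hd : δm / 2 ≤ dist y (x s) := by
            have h1 : δm ≤ dist (x s) (x s₀) := hsep s hs s₀ hs₀P hne
            have h2 : dist (x s) (x s₀) ≤ dist (x s) y + dist y (x s₀) := dist_triangle _ _ _
            rw [dist_comm y (x s)]
            linarith
          rw [hφ0 s y hd, mul_zero]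
        rw [hsum, abs_mul]
        have h01 := hφ01 s₀ y
        calc |c s₀| * |φ s₀ y| ≤ (ε / 4) * 1 := by
              refine mul_le_mul (hc s₀ hs₀P) ?_ (abs_nonneg _) (by positivity)
              rw [abs_of_nonneg h01.1]; exact h01.2
        _ = ε / 4 := mul_one _
      · push_neg at hex
        have : h y = 0 := by
          refine Finset.sum_eq_zero fun s hs => ?_
          rw [hφ0 s y (hex s hs), mul_zero]
        rw [this]
        simp
        positivity
    set g : C(Ω, ℝ) := ⟨fun y => f y + h y, f.continuous.add hcont⟩ with hgdef
    have hgx : ∀ t ∈ P, g (x t) = f (x (idx t)) := by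
      intro t ht
      show f (x t) + h (x t) = f (x (idx t))
      have hsum : h (x t) = c t * φ t (x t) := by
        refine Finset.sum_eq_single_of_mem t ht fun s hs hne => ?_
        have hd : δm / 2 ≤ dist (x t) (x s) := by
          have h1 : δm ≤ dist (x t) (x s) := by
            rw [dist_comm]
            exact hsep s hs t ht hne
          linarith
        rw [hφ0 s (x t) hd, mul_zero]
      rw [hsum, hφ1 t, mul_one, hcdef]
      ring
    have hdist : dist g f < ε := by
      rw [ContinuousMap.dist_lt_iff hε]
      intro y
      have : dist (g y) (f y) = |h y| := by
        rw [Real.dist_eq]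
        congr 1
        show f y + h y - f y = h y
        ring
      rw [this]
      calc |h y| ≤ ε / 4 := hbound y
      _ < ε := by linarith
    -- the witness point
    have hq0 := hQ 0 (Nat.zero_le _)
    simp only [Function.iterate_zero_apply, Nat.zero_add] at hq0
    have hwitball : x Q ∈ Metric.ball z r := by
      rw [mem_ball]
      calc dist (x Q) z ≤ dist (x Q) ω₀ + dist ω₀ z := dist_triangle _ _ _
      _ < ε' + dist ω₀ z := by rw [dist_comm]; exact add_lt_add_left hq0 _
      _ ≤ η + dist ω₀ z := add_le_add_left hε'η _
      _ < r := by simp only [hηdef]; linarith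
    refine ⟨g, hdist, x Q, hwitball, Q, hQM, hQpos, ?_⟩
    intro n hn
    obtain ⟨hn1, hnQ⟩ := Finset.mem_Icc.mp hn
    have hxQ : x Q = apowB T (Q : ℤ) ω₀ := (apowB_natCast T Q ω₀).symm
    have e1 : apowB T (n : ℤ) (x Q) = x (n + Q) := by
      rw [hxQ, ← apowB_add, show (n : ℤ) + (Q : ℤ) = ((n + Q : ℕ) : ℤ) by push_cast; ring,
        apowB_natCast]
    have e2 : apowB T ((n : ℤ) + Q) (x Q) = x (n + 2 * Q) := by
      rw [hxQ, ← apowB_add, show (n : ℤ) + (Q : ℤ) + (Q : ℤ) = ((n + 2 * Q : ℕ) : ℤ) by push_cast; ring,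
        apowB_natCast]
    have e3 : apowB T ((n : ℤ) - Q) (x Q) = x n := by
      rw [hxQ, ← apowB_add, show (n : ℤ) - (Q : ℤ) + (Q : ℤ) = ((n : ℕ) : ℤ) by ring,
        apowB_natCast]
    have hidxn : idx n = n := by
      simp only [hidxdef]
      rw [Nat.mod_eq_of_lt (by omega)]
      omega
    have hidxnQ : idx (n + Q) = n := by
      simp only [hidxdef]
      rw [show n + Q - 1 = (n - 1) + Q by omega, Nat.add_mod_right, Nat.mod_eq_of_lt (by omega)]
      omega
    have hidxn2Q : idx (n + 2 * Q) = n := by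
      simp only [hidxdef]
      rw [show n + 2 * Q - 1 = (n - 1) + 2 * Q by omega, show (n-1) + 2*Q = (n-1) + Q + Q by ring,
        Nat.add_mod_right, Nat.add_mod_right, Nat.mod_eq_of_lt (by omega)]
      omega
    have hnP : n ∈ P := Finset.mem_Icc.mpr ⟨hn1, by omega⟩
    have hnQP : n + Q ∈ P := Finset.mem_Icc.mpr ⟨by omega, by omega⟩
    have hn2QP : n + 2 * Q ∈ P := Finset.mem_Icc.mpr ⟨by omega, by omega⟩
    have v1 : g (apowB T (n : ℤ) (x Q)) = f (x n) := by rw [e1, hgx _ hnQP, hidxnQ]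
    have v2 : g (apowB T ((n : ℤ) + Q) (x Q)) = f (x n) := by rw [e2, hgx _ hn2QP, hidxn2Q]
    have v3 : g (apowB T ((n : ℤ) - Q) (x Q)) = f (x n) := by rw [e3, hgx _ hnP, hidxn]
    rw [v1, v2, v3]
    have hpow : (0 : ℝ) < (M : ℝ) ^ (-(Q : ℤ)) := zpow_pos hMpos _
    simp only [sub_self, abs_zero]
    exact ⟨hpow, hpow⟩

end ThmBAux

/-- Theorem B. -/
theorem theoremB {Ω : Type*} [MetricSpace Ω] [CompactSpace Ω] (T : Ω ≃ₜ Ω)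
    (htrp : Dense (PRPset ⇑T)) :
    ∃ F : Set C(Ω, ℝ), F ∈ residual C(Ω, ℝ) ∧
      ∀ f ∈ F, ∃ Ωf : Set Ω, Ωf ∈ residual Ω ∧
        ∀ ω ∈ Ωf, IsGordonPotential (fun n : ℤ => f ((T.toEquiv ^ n) ω)) := by
  classical
  rcases isEmpty_or_nonempty Ω with hempty | hne
  · exact ⟨Set.univ, Filter.univ_mem, fun f _ =>
      ⟨Set.univ, Filter.univ_mem, fun ω _ => (hempty.false ω).elim⟩⟩
  obtain ⟨z, hz⟩ := TopologicalSpace.exists_dense_seq Ω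
  set O : ℕ → ℕ × ℕ → Set C(Ω, ℝ) := fun m p =>
    {f | ∃ ω ∈ Metric.ball (z p.1) (1 / (p.2 + 1 : ℝ)), ω ∈ wsetB T f (m + 1)} with hOdef
  have hOopen : ∀ m p, IsOpen (O m p) := fun m p => isOpen_osetB T (m + 1) _
  have hOdense : ∀ m p, Dense (O m p) := by
    intro m p
    rw [Metric.dense_iff]
    intro f ρ hρ
    obtain ⟨g, hdist, ω, hωball, hωW⟩ :=
      dense_stepB T htrp f hρ (Nat.le_add_left 1 m) (z p.1) (by positivity : (0:ℝ) < 1 / (p.2 + 1 : ℝ))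
    exact ⟨g, Metric.mem_ball.mpr hdist, ω, hωball, hωW⟩
  refine ⟨⋂ (m : ℕ), ⋂ (p : ℕ × ℕ), O m p, ?_, ?_⟩
  · exact countable_iInter_mem.2 fun m => countable_iInter_mem.2 fun p =>
      residual_of_dense_open (hOopen m p) (hOdense m p)
  intro f hf
  have hfm : ∀ m p, f ∈ O m p := by
    intro m p
    exact Set.mem_iInter.mp (Set.mem_iInter.mp hf m) p
  have hWdense : ∀ m : ℕ, Dense (wsetB T f (m + 1)) := by
    intro m
    rw [Metric.dense_iff]
    intro ξ ρ hρ
    obtain ⟨j, hj⟩ := Metric.denseRange_iff.mp hz ξ (ρ / 2) (by positivity)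
    obtain ⟨i, hi⟩ := exists_nat_one_div_lt (show (0:ℝ) < ρ / 2 by positivity)
    obtain ⟨ω, hωball, hωW⟩ := hfm m (j, i)
    refine ⟨ω, Metric.mem_ball.mpr ?_, hωW⟩
    have h1 : dist ω (z j) < 1 / (i + 1 : ℝ) := Metric.mem_ball.mp hωball
    calc dist ω ξ ≤ dist ω (z j) + dist (z j) ξ := dist_triangle _ _ _
    _ < 1 / (i + 1 : ℝ) + ρ / 2 := by
        have := dist_comm ξ (z j) ▸ hj
        exact add_lt_add h1 (by rwa [dist_comm])
    _ < ρ / 2 + ρ / 2 := by linarith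
    _ = ρ := by ring
  refine ⟨⋂ (m : ℕ), wsetB T f (m + 1), ?_, ?_⟩
  · exact countable_iInter_mem.2 fun m =>
      residual_of_dense_open (isOpen_wsetB T f (m + 1)) (hWdense m)
  intro ω hω
  have hsel : ∀ m : ℕ, 1 ≤ m → ∃ q : ℕ, m ≤ q ∧ 1 ≤ q ∧ goodAt T f m q ω := by
    intro m hm
    have := Set.mem_iInter.mp hω (m - 1)
    rw [Nat.sub_add_cancel hm] at this
    exact this
  set q : ℕ → ℕ := fun m => if hm : 1 ≤ m then (hsel m hm).choose else 1 with hqdef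
  have hqspec : ∀ m (hm : 1 ≤ m), m ≤ q m ∧ 1 ≤ q m ∧ goodAt T f m (q m) ω := by
    intro m hm
    simp only [hqdef, dif_pos hm]
    exact (hsel m hm).choose_spec
  constructor
  · exact ⟨‖f‖, fun n => by
      have := f.norm_coe_le_norm (apowB T n ω); rwa [Real.norm_eq_abs] at this⟩
  refine ⟨q, 1, one_pos, ?_, ?_⟩
  · refine tendsto_atTop_mono (fun m => ?_) tendsto_id
    show m ≤ q m
    by_cases hm : 1 ≤ m
    · exact (hqspec m hm).1
    · simp only [hqdef, dif_neg hm]; omega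
  intro m hm n hn1 hnq
  have hgood := (hqspec m hm).2.2
  have hn0 : (0:ℤ) ≤ n := by linarith
  have hnnat : ((n.toNat : ℕ) : ℤ) = n := Int.toNat_of_nonneg hn0
  have hmem : n.toNat ∈ Finset.Icc 1 (q m) := by
    rw [Finset.mem_Icc]
    omega
  have h := hgood n.toNat hmem
  rw [hnnat] at h
  constructor
  · refine le_of_lt ?_
    show |f (apowB T n ω) - f (apowB T (n + (q m : ℤ)) ω)| < 1 * (m : ℝ) ^ (-(q m : ℤ))
    rw [one_mul]
    exact h.1
  · refine le_of_lt ?_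
    show |f (apowB T n ω) - f (apowB T (n - (q m : ℤ)) ω)| < 1 * (m : ℝ) ^ (-(q m : ℤ))
    rw [one_mul]
    exact h.2
end

section
/- Let (Ω, d) be a compact metric space and T : Ω → Ω a minimal isometry (i.e., every forward orbit is dense and d(Tω₁, Tω₂) = d(ω₁, ω₂) for all ω₁, ω₂). Then PRP(T) = Ω; in particular the system (Ω, T) satisfies TRP. -/
theorem Isometry.iterate {α : Type*} [PseudoEMetricSpace α] {T : α → α} (hT : Isometry T) :
    ∀ n : ℕ, Isometry T^[n]
  | 0 => isometry_id
  | n + 1 => (hT.iterate n).comp hT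

section PseudoMetric

variable {Ω : Type*} [PseudoMetricSpace Ω] {T : Ω → Ω}

theorem Isometry.dist_iterate_iterate_add (hT : Isometry T) (ω : Ω) (n q : ℕ) :
    dist (T^[n] ω) (T^[n + q] ω) = dist ω (T^[q] ω) := by
  rw [Function.iterate_add_apply]
  exact (hT.iterate n).dist_eq ω (T^[q] ω)

theorem exists_pos_dist_iterate_lt {ω : Ω} (hω : Dense (Set.range fun n : ℕ => T^[n] (T ω)))
    {ε : ℝ} (hε : 0 < ε) : ∃ q : ℕ, 0 < q ∧ dist ω (T^[q] ω) < ε := by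
  obtain ⟨_, ⟨m, rfl⟩, hm⟩ := hω.exists_dist_lt ω hε
  exact ⟨m + 1, m.succ_pos, by rwa [Function.iterate_succ_apply]⟩

theorem Isometry.mem_PRPset {ω : Ω} (hT : Isometry T)
    (hω : ∀ ε > (0 : ℝ), ∃ q : ℕ, 0 < q ∧ dist ω (T^[q] ω) < ε) : ω ∈ PRPset T := by
  intro ε hε r _
  obtain ⟨q, hq, hclose⟩ := hω ε hε
  exact ⟨q, hq, fun n _ => (hT.dist_iterate_iterate_add ω n q).trans_lt hclose⟩

end PseudoMetric

theorem minimal_isometry_grp_general {Ω : Type*} [MetricSpace Ω]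
    (T : Ω → Ω) (hiso : Isometry T)
    (hmin : ∀ ω : Ω, Dense (Set.range fun n : ℕ => T^[n] ω)) :
    PRPset T = Set.univ ∧ Dense (PRPset T) := by
  have huniv : PRPset T = Set.univ :=
    Set.eq_univ_of_forall fun ω => hiso.mem_PRPset fun _ hε =>
      exists_pos_dist_iterate_lt (hmin (T ω)) hε
  exact ⟨huniv, huniv ▸ dense_univ⟩

/-- A minimal isometry of a compact metric space satisfies the global (hence topological)
repetition property. -/
theorem minimal_isometry_grp {Ω : Type*} [MetricSpace Ω] [CompactSpace Ω]
    (T : Ω → Ω) (hiso : Isometry T)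
    (hmin : ∀ ω : Ω, Dense (Set.range fun n : ℕ => T^[n] ω)) :
    PRPset T = Set.univ ∧ Dense (PRPset T) :=
  minimal_isometry_grp_general T hiso hmin
end

section
/- Let α ∈ ℝ \ ℚ and let T : 𝕋² → 𝕋² be the skew-shift T(ω₁, ω₂) = (ω₁ + 2α, ω₁ + ω₂). If α is not badly approximable (i.e., liminf_{q→∞} q·⟨qα⟩ = 0, where ⟨x⟩ denotes the distance from x to the nearest integer), then PRP(T) = 𝕋², i.e., the system satisfies the global repetition property GRP. -/
/-- The skew-shift `(ω₁, ω₂) ↦ (ω₁ + 2α, ω₁ + ω₂)` on `𝕋²`. -/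
noncomputable def skewShift (α : ℝ) :
    (AddCircle (1 : ℝ) × AddCircle (1 : ℝ)) → (AddCircle (1 : ℝ) × AddCircle (1 : ℝ)) :=
  fun ω => (ω.1 + ((2 * α : ℝ) : AddCircle (1 : ℝ)), ω.1 + ω.2)

lemma coeff_id (n p : ℕ) (hp : 0 < p) :
    (n + p) * (n + p - 1) = n * (n - 1) + p * (2 * n + p - 1) := by
  obtain ⟨m, rfl⟩ : ∃ m, p = m + 1 := ⟨p - 1, by omega⟩
  cases n with
  | zero => simp
  | succ l =>
    have h1 : l + 1 + (m + 1) - 1 = l + m + 1 := by omega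
    have h2 : 2 * (l + 1) + (m + 1) - 1 = 2 * l + m + 2 := by omega
    have h3 : l + 1 - 1 = l := by omega
    rw [h1, h2, h3]; ring

lemma skewShift_iterate (α : ℝ) (x y : AddCircle (1 : ℝ)) (n : ℕ) :
    (skewShift α)^[n] (x, y) =
      (x + (2 * n) • ((α : ℝ) : AddCircle (1 : ℝ)),
       y + n • x + (n * (n - 1)) • ((α : ℝ) : AddCircle (1 : ℝ))) := by
  induction n with
  | zero => simp
  | succ n ih =>
    rw [Function.iterate_succ_apply', ih]
    set a : AddCircle (1 : ℝ) := ((α : ℝ) : AddCircle (1 : ℝ)) with ha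
    have hc : ((2 * α : ℝ) : AddCircle (1 : ℝ)) = 2 • a := by
      rw [ha, ← AddCircle.coe_nsmul]
      norm_num
    have h1 : 2 * (n + 1) = 2 * n + 2 := by ring
    have h2 : (n + 1) * (n + 1 - 1) = n * (n - 1) + 2 * n := by
      cases n with
      | zero => simp
      | succ m => simp only [Nat.add_sub_cancel]; ring
    simp only [skewShift, h1, h2, add_nsmul, succ_nsmul, hc, Prod.mk.injEq]
    constructor
    · abel
    · abel

set_option maxHeartbeats 1000000 in
/-- If `α` is irrational and not badly approximable
(`liminf_{q→∞} q⟨qα⟩ = 0`, where `⟨x⟩ = ‖(x : 𝕋)‖` is the distance to the nearest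
integer), then the skew-shift satisfies the global repetition property. -/
theorem skewShift_grp_of_not_badly_approximable (α : ℝ) (hirr : Irrational α)
    (hnb : ∀ ε > (0 : ℝ), ∀ N : ℕ, ∃ q : ℕ, N ≤ q ∧ 0 < q ∧
      (q : ℝ) * ‖(((q : ℝ) * α : ℝ) : AddCircle (1 : ℝ))‖ < ε) :
    PRPset (skewShift α) = Set.univ := by
  haveI : Fact ((0 : ℝ) < 1) := ⟨one_pos⟩
  ext ω
  simp only [Set.mem_univ, iff_true, PRPset, Set.mem_setOf_eq]
  obtain ⟨x, y⟩ := ω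
  intro ε hε r hr
  set a : AddCircle (1 : ℝ) := ((α : ℝ) : AddCircle (1 : ℝ)) with ha
  -- choose K
  obtain ⟨K, hK⟩ := exists_nat_gt (2 / ε)
  have hK0 : 0 < K := by
    by_contra h
    push_neg at h
    interval_cases K
    · simp at hK
      nlinarith [div_pos (by norm_num : (0:ℝ) < 2) hε]
  have hKR : (0 : ℝ) < K := by exact_mod_cast hK0
  have hK1R : (1 : ℝ) ≤ (K : ℝ) := by exact_mod_cast hK0
  have h1r : (1 : ℝ) ≤ (r : ℝ) := by exact_mod_cast hr
  set δ : ℝ := ε / (2 * (2 * r + 1) * K ^ 2) with hδdef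
  have hδ : 0 < δ := by
    apply div_pos hε
    positivity
  obtain ⟨q, -, hq0, hqc⟩ := hnb δ hδ 1
  have hcoe : (((q : ℝ) * α : ℝ) : AddCircle (1 : ℝ)) = q • a := by
    rw [ha, ← AddCircle.coe_nsmul, nsmul_eq_mul]
  rw [hcoe] at hqc
  set c : ℝ := ‖q • a‖ with hcdef
  have hc0 : 0 ≤ c := norm_nonneg _
  -- pigeonhole for q • x
  obtain ⟨k, hkmem, hkx⟩ := AddCircle.exists_norm_nsmul_le (q • x) hK0
  obtain ⟨hk1, hkK⟩ := hkmem
  set p := k * q with hp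
  have hp0 : 0 < p := Nat.mul_pos hk1 hq0
  refine ⟨p, hp0, ?_⟩
  intro n hn
  rw [skewShift_iterate, skewShift_iterate, Prod.dist_eq]
  -- useful real bounds
  have hqcR : (q : ℝ) * c < δ := hqc
  have hcδ : c < δ := by
    have : (1 : ℝ) ≤ (q : ℝ) := by exact_mod_cast hq0
    nlinarith
  have hkKR : (k : ℝ) ≤ (K : ℝ) := by exact_mod_cast hkK
  apply max_lt
  · -- first coordinate
    rw [dist_eq_norm]
    have h1 : (2 * (n + p)) = 2 * n + 2 * p := by ring
    have h2 : (x + (2 * n) • a) - (x + ((2 * n) • a + (2 * p) • a)) = -((2 * p) • a) := by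
      abel
    rw [h1, add_nsmul, h2, norm_neg]
    have h3 : 2 * p = q * (2 * k) := by rw [hp]; ring
    rw [h3, mul_nsmul]
    calc ‖(2 * k) • (q • a)‖ ≤ (2 * k : ℕ) * c := norm_nsmul_le
      _ < ε := by
          have hb : ((2 * k : ℕ) : ℝ) ≤ 2 * (K : ℝ) := by push_cast; linarith
          have hδb : 2 * (K : ℝ) * δ ≤ ε := by
            have hD : (0:ℝ) < 2 * (2 * (r:ℝ) + 1) * (K:ℝ) ^ 2 := by positivity
            rw [hδdef, mul_comm, div_mul_eq_mul_div, div_le_iff₀ hD]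
            push_cast
            nlinarith [mul_nonneg (mul_nonneg hε.le hKR.le)
              (by nlinarith : (0:ℝ) ≤ (2 * (r:ℝ) + 1) * (K:ℝ) - 1)]
          nlinarith
  · -- second coordinate
    rw [dist_eq_norm]
    have hco : (n + p) * (n + p - 1) = n * (n - 1) + p * (2 * n + p - 1) :=
      coeff_id n p hp0
    have h4 : (y + n • x + (n * (n - 1)) • a) -
        (y + (n • x + p • x) + ((n * (n - 1)) • a + (p * (2 * n + p - 1)) • a)) =
        -(p • x + (p * (2 * n + p - 1)) • a) := by abel
    rw [hco, add_nsmul, add_nsmul, h4, norm_neg]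
    have hM : p * (2 * n + p - 1) = q * (k * (2 * n + p - 1)) := by rw [hp]; ring
    have hpq : p = q * k := by rw [hp]; ring
    have hpx : p • x = k • (q • x) := by rw [hpq, mul_nsmul]
    rw [hpx, hM, mul_nsmul]
    have b1 : ‖k • (q • x)‖ < ε / 2 := by
      refine lt_of_le_of_lt hkx ?_
      rw [div_lt_iff₀ (by positivity : (0:ℝ) < ((K + 1 : ℕ) : ℝ))]
      have h2K : 2 / ε < (K : ℝ) + 1 := by linarith
      rw [div_lt_iff₀ hε] at h2K
      push_cast
      linarith
    have b2 : ‖(k * (2 * n + p - 1)) • (q • a)‖ < ε / 2 := by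
      calc ‖(k * (2 * n + p - 1)) • (q • a)‖ ≤ (k * (2 * n + p - 1) : ℕ) * c :=
            norm_nsmul_le
        _ < ε / 2 := by
            have hcoefN : k * (2 * n + p - 1) ≤ (2 * r + 1) * K ^ 2 * q := by
              have h5 : 2 * n + p - 1 ≤ (2 * r + 1) * p := by
                have hnp : 2 * n ≤ 2 * (r * p) := by omega
                have : 2 * n + p ≤ (2 * r + 1) * p := by nlinarith
                omega
              calc k * (2 * n + p - 1) ≤ K * ((2 * r + 1) * p) :=
                    Nat.mul_le_mul hkK h5
                _ = (2 * r + 1) * (K * k) * q := by rw [hp]; ring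
                _ ≤ (2 * r + 1) * (K * K) * q := by
                    exact Nat.mul_le_mul_right q (Nat.mul_le_mul_left _ (Nat.mul_le_mul_left _ hkK))
                _ = (2 * r + 1) * K ^ 2 * q := by ring
            have hcoefR : ((k * (2 * n + p - 1) : ℕ) : ℝ) ≤ (2 * (r:ℝ) + 1) * (K:ℝ) ^ 2 * q := by
              exact_mod_cast hcoefN
            have hfin : (2 * (r:ℝ) + 1) * (K:ℝ) ^ 2 * δ = ε / 2 := by
              rw [hδdef]
              field_simp
            have hpos : (0:ℝ) < (2 * (r:ℝ) + 1) * (K:ℝ) ^ 2 := by positivity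
            calc ((k * (2 * n + p - 1) : ℕ) : ℝ) * c
                ≤ (2 * (r:ℝ) + 1) * (K:ℝ) ^ 2 * ((q:ℝ) * c) := by nlinarith
              _ < (2 * (r:ℝ) + 1) * (K:ℝ) ^ 2 * δ := by nlinarith
              _ = ε / 2 := hfin
    calc ‖k • (q • x) + (k * (2 * n + p - 1)) • (q • a)‖
        ≤ ‖k • (q • x)‖ + ‖(k * (2 * n + p - 1)) • (q • a)‖ := norm_add_le _ _
      _ < ε / 2 + ε / 2 := add_lt_add b1 b2
      _ = ε := by ring
end

section
/- Let α ∈ ℝ \ ℚ and T : 𝕋² → 𝕋² the skew-shift T(ω₁, ω₂) = (ω₁ + 2α, ω₁ + ω₂). If the system (𝕋², T) satisfies TRP (PRP(T) is dense in 𝕋²), then α is not badly approximable: liminf_{q→∞} q·⟨qα⟩ = 0. -/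
private lemma norm_coe_one (x : ℝ) : ‖(x : AddCircle (1 : ℝ))‖ = |x - round x| := by
  rw [AddCircle.norm_eq]; norm_num

private lemma coe_int_zero (m : ℤ) : ((m : ℝ) : AddCircle (1 : ℝ)) = 0 := by
  rw [AddCircle.coe_eq_zero_iff]
  exact ⟨m, by simp⟩

private lemma not_in_middle {ε y : ℝ} (hy1 : y < 1 - ε)
    (hn : ‖(y : AddCircle (1 : ℝ))‖ < ε) (hge : ε ≤ y) : False := by
  rw [norm_coe_one] at hn
  rcases le_or_gt (round y) 0 with h | h
  · have h' : (round y : ℝ) ≤ 0 := by exact_mod_cast h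
    have h2 := le_abs_self (y - round y)
    linarith
  · have h1 : (1 : ℤ) ≤ round y := h
    have h' : (1 : ℝ) ≤ (round y : ℝ) := by exact_mod_cast h1
    have h2 := neg_abs_le (y - round y)
    linarith

private lemma keyC {ε y₀ δ : ℝ} (hε4 : ε ≤ 1/4) (hy : |y₀| < ε)
    (hδ0 : 0 ≤ δ) (hδ : δ < 2*ε) (M : ℕ)
    (h : ∀ n ≤ M, ‖((y₀ + (n : ℝ)*δ : ℝ) : AddCircle (1 : ℝ))‖ < ε) :
    (M : ℝ) * δ < 2*ε := by
  have hy' : -ε < y₀ ∧ y₀ < ε := abs_lt.mp hy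
  have key : ∀ n, n ≤ M → y₀ + (n : ℝ)*δ < ε := by
    intro n
    induction n with
    | zero => intro _; simpa using hy'.2
    | succ k ih =>
      intro hn
      have hk := ih (le_trans (Nat.le_succ k) hn)
      by_contra hge
      push_neg at hge
      have hcast : ((k+1 : ℕ) : ℝ) = (k : ℝ) + 1 := by push_cast; ring
      have hlt : y₀ + ((k+1 : ℕ) : ℝ)*δ < 1 - ε := by
        rw [hcast]; nlinarith
      exact not_in_middle hlt (h (k+1) hn) hge
  have hM := key M le_rfl
  linarith [hy'.1]

private lemma keyB {ε : ℝ} (hε : 0 < ε) (hε4 : ε ≤ 1/4)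
    (x : AddCircle (1 : ℝ)) (s : ℝ) (M : ℕ) (hM : 1 ≤ M)
    (h : ∀ n ≤ M, ‖x + (((n : ℝ)*s : ℝ) : AddCircle (1 : ℝ))‖ < ε) :
    (M : ℝ) * ‖((s : ℝ) : AddCircle (1 : ℝ))‖ < 2*ε := by
  induction x using QuotientAddGroup.induction_on with
  | H y =>
  set δ : ℝ := s - round s with hδdef
  have hnormδ : ‖((s : ℝ) : AddCircle (1 : ℝ))‖ = |δ| := by rw [norm_coe_one]
  set y₀ : ℝ := y - round y with hy₀def
  have h0 : ‖((y : ℝ) : AddCircle (1 : ℝ))‖ < ε := by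
    have h0 := h 0 (Nat.zero_le M)
    simpa using h0
  have hy0 : |y₀| < ε := by
    rw [hy₀def, ← norm_coe_one]
    exact h0
  have hδlt : |δ| < 2*ε := by
    have h1 := h 1 hM
    simp only [Nat.cast_one, one_mul] at h1
    have heq : ((s : ℝ) : AddCircle (1 : ℝ))
        = (((y : ℝ) : AddCircle (1 : ℝ)) + ((s : ℝ) : AddCircle (1 : ℝ)))
          - ((y : ℝ) : AddCircle (1 : ℝ)) := by
      rw [add_sub_cancel_left]
    rw [← hnormδ, heq]
    calc ‖(((y : ℝ) : AddCircle (1 : ℝ)) + ((s : ℝ) : AddCircle (1 : ℝ)))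
          - ((y : ℝ) : AddCircle (1 : ℝ))‖
        ≤ ‖(((y : ℝ) : AddCircle (1 : ℝ)) + ((s : ℝ) : AddCircle (1 : ℝ)))‖
          + ‖((y : ℝ) : AddCircle (1 : ℝ))‖ := norm_sub_le _ _
      _ < 2*ε := by linarith
  have h' : ∀ n, n ≤ M → ‖((y₀ + (n : ℝ)*δ : ℝ) : AddCircle (1 : ℝ))‖ < ε := by
    intro n hn
    have heq : (y₀ + (n : ℝ)*δ : ℝ)
        = (y + (n : ℝ)*s) + ((-(round y) - (n : ℤ)*(round s) : ℤ) : ℝ) := by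
      rw [hy₀def, hδdef]; push_cast; ring
    rw [heq, AddCircle.coe_add, coe_int_zero, add_zero, AddCircle.coe_add]
    exact h n hn
  rcases le_or_gt 0 δ with hδ0 | hδ0
  · rw [hnormδ, abs_of_nonneg hδ0]
    exact keyC hε4 hy0 hδ0 (by rwa [abs_of_nonneg hδ0] at hδlt) M h'
  · have h'' : ∀ n, n ≤ M → ‖((-y₀ + (n : ℝ)*(-δ) : ℝ) : AddCircle (1 : ℝ))‖ < ε := by
      intro n hn
      have heq : (-y₀ + (n : ℝ)*(-δ) : ℝ) = -(y₀ + (n : ℝ)*δ) := by ring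
      rw [heq, AddCircle.coe_neg, norm_neg]
      exact h' n hn
    have := keyC hε4 (by rw [abs_neg]; exact hy0) (le_of_lt (neg_pos.mpr hδ0))
      (by rwa [abs_of_neg hδ0] at hδlt) M h''
    rw [hnormδ, abs_of_neg hδ0]
    exact this

private lemma skew_iter (α : ℝ) (ω : AddCircle (1 : ℝ) × AddCircle (1 : ℝ)) (n : ℕ) :
    (skewShift α)^[n] ω =
      (ω.1 + ((2*(n : ℝ)*α : ℝ) : AddCircle (1 : ℝ)),
       n • ω.1 + (((n : ℝ)*((n : ℝ)-1)*α : ℝ) : AddCircle (1 : ℝ)) + ω.2) := by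
  induction n with
  | zero =>
    simp only [Function.iterate_zero, id_eq, Nat.cast_zero, zero_nsmul]
    norm_num
  | succ k ih =>
    rw [Function.iterate_succ_apply', ih]
    unfold skewShift
    refine Prod.ext ?_ ?_ <;> dsimp only
    · have e1 : (2*((k+1 : ℕ) : ℝ)*α : ℝ) = 2*(k : ℝ)*α + 2*α := by push_cast; ring
      rw [e1, AddCircle.coe_add]
      abel
    · have e2 : (((k+1 : ℕ) : ℝ)*(((k+1 : ℕ) : ℝ)-1)*α : ℝ)
          = (k : ℝ)*((k : ℝ)-1)*α + 2*(k : ℝ)*α := by push_cast; ring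
      rw [e2, AddCircle.coe_add, succ_nsmul]
      abel

private lemma norm_mul_pos (α : ℝ) (hirr : Irrational α) (k : ℕ) (hk : 0 < k) :
    0 < ‖(((k : ℝ)*α : ℝ) : AddCircle (1 : ℝ))‖ := by
  rw [norm_pos_iff]
  intro hzero
  rw [AddCircle.coe_eq_zero_iff] at hzero
  obtain ⟨m, hm⟩ := hzero
  have hm' : (m : ℝ) = (k : ℝ)*α := by simpa using hm
  have hk' : (k : ℝ) ≠ 0 := Nat.cast_ne_zero.mpr (by omega)
  exact hirr ⟨(m : ℚ)/(k : ℚ), by push_cast; field_simp; linarith⟩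

private lemma exists_lb (α : ℝ) (hirr : Irrational α) (N : ℕ) :
    ∃ c > (0 : ℝ), ∀ k : ℕ, 0 < k → k < N → c ≤ ‖(((k : ℝ)*α : ℝ) : AddCircle (1 : ℝ))‖ := by
  induction N with
  | zero => exact ⟨1, one_pos, fun k hk1 hk2 => absurd hk2 (by omega)⟩
  | succ m ih =>
    obtain ⟨c, hc, hcle⟩ := ih
    rcases Nat.eq_zero_or_pos m with hm | hm
    · exact ⟨c, hc, fun k hk1 hk2 => absurd (by omega : k = 0) (by omega)⟩
    · have hpos := norm_mul_pos α hirr m hm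
      refine ⟨min c ‖(((m : ℝ)*α : ℝ) : AddCircle (1 : ℝ))‖, lt_min hc hpos, ?_⟩
      intro k hk1 hk2
      rcases Nat.lt_succ_iff_lt_or_eq.mp hk2 with h | h
      · exact le_trans (min_le_left _ _) (hcle k hk1 h)
      · subst h; exact min_le_right _ _

/-- If the skew-shift satisfies TRP, then `α` is not badly approximable:
`liminf_{q→∞} q⟨qα⟩ = 0`, where `⟨x⟩ = ‖(x : 𝕋)‖` is the distance to `ℤ`. -/
theorem not_badly_approximable_of_skewShift_trp (α : ℝ) (hirr : Irrational α)
    (htrp : Dense (PRPset (skewShift α))) :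
    ∀ ε > (0 : ℝ), ∀ N : ℕ, ∃ q : ℕ, N ≤ q ∧ 0 < q ∧
      (q : ℝ) * ‖(((q : ℝ) * α : ℝ) : AddCircle (1 : ℝ))‖ < ε := by
  intro ε hε N
  obtain ⟨c, hc0, hcbd⟩ := exists_lb α hirr N
  set ε' : ℝ := min (min (ε/2) (c/2)) (1/4) with hε'def
  have hε'pos : 0 < ε' := lt_min (lt_min (by linarith) (by linarith)) (by norm_num)
  have hε'4 : ε' ≤ 1/4 := min_le_right _ _
  have hε'ε : ε' ≤ ε/2 := le_trans (min_le_left _ _) (min_le_left _ _)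
  have hε'c : ε' ≤ c/2 := le_trans (min_le_left _ _) (min_le_right _ _)
  obtain ⟨ω, hω⟩ := htrp.nonempty
  obtain ⟨q, hqpos, hdist⟩ := hω ε' hε'pos 4 (by norm_num)
  have hq1 : (1 : ℝ) ≤ (q : ℝ) := by exact_mod_cast hqpos
  -- second-coordinate estimate
  have hsnd : ∀ n, n ≤ 4*q →
      ‖(q • ω.1 + ((((q : ℝ)*(q : ℝ) - (q : ℝ))*α : ℝ) : AddCircle (1 : ℝ)))
        + (((n : ℝ)*(2*(q : ℝ)*α) : ℝ) : AddCircle (1 : ℝ))‖ < ε' := by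
    intro n hn
    have h1 := hdist n hn
    have h2 : dist ((skewShift α)^[n] ω).2 ((skewShift α)^[n+q] ω).2
        ≤ dist ((skewShift α)^[n] ω) ((skewShift α)^[n+q] ω) := by
      rw [Prod.dist_eq]; exact le_max_right _ _
    have h3 := lt_of_le_of_lt h2 h1
    rw [dist_eq_norm] at h3
    have key : ((skewShift α)^[n+q] ω).2 - ((skewShift α)^[n] ω).2
        = (q • ω.1 + ((((q : ℝ)*(q : ℝ) - (q : ℝ))*α : ℝ) : AddCircle (1 : ℝ)))
          + (((n : ℝ)*(2*(q : ℝ)*α) : ℝ) : AddCircle (1 : ℝ)) := by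
      rw [skew_iter, skew_iter]
      have e1 : (((n+q : ℕ) : ℝ)*(((n+q : ℕ) : ℝ)-1)*α : ℝ)
          = ((n : ℝ)*((n : ℝ)-1)*α)
            + ((((q : ℝ)*(q : ℝ)-(q : ℝ))*α) + ((n : ℝ)*(2*(q : ℝ)*α))) := by
        push_cast; ring
      rw [e1, AddCircle.coe_add, AddCircle.coe_add, add_nsmul]
      grind
    rw [← key, ← norm_neg, neg_sub]
    exact h3
  have hB := keyB hε'pos hε'4 _ (2*(q : ℝ)*α) (4*q) (by omega) hsnd
  set ν : ℝ := ‖((2*(q : ℝ)*α : ℝ) : AddCircle (1 : ℝ))‖ with hνdef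
  have hν0 : 0 ≤ ν := norm_nonneg _
  have hB' : 4*(q : ℝ)*ν < 2*ε' := by
    have : ((4*q : ℕ) : ℝ) = 4*(q : ℝ) := by push_cast; ring
    rwa [this] at hB
  have hcast : (((2*q : ℕ) : ℝ)*α : ℝ) = 2*(q : ℝ)*α := by push_cast; ring
  have hνc : ν < c := by nlinarith
  refine ⟨2*q, ?_, by omega, ?_⟩
  · by_contra hcon
    push_neg at hcon
    have := hcbd (2*q) (by omega) hcon
    rw [hcast] at this
    linarith
  · rw [hcast]
    have : ((2*q : ℕ) : ℝ) = 2*(q : ℝ) := by push_cast; ring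
    rw [this]
    nlinarith
end
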